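/- arXiv:2508.11005 — 4 statements merged into one kernel-verified Lean document; each statement's English description precedes it below -/
import Mathlib

section
/- The algebraic tensor product of two separated convex bornological vector spaces, equipped with the tensor product bornology (generated by convex hulls of images of products of bounded sets), is separated: its only bounded vector subspace is {0}. -/
/-!
For a bounded set `A` and `v ≠ 0`, the absolutely convex hull `D` of `A ∪ {v}` is bounded, so by
separation it contains no line through `v`. Hence the gauge of `D` is a seminorm on `span D` that is
positive at `v`, and Hahn–Banach yields a functional `f` with `f v ≠ 0` and `|f| ≤ 1` on `A`.
Writing `x ≠ 0` in `V ⊗ W` as `∑ vᵢ ⊗ bᵢ` over a basis of `W`, two such functionals `f`, `g`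
give `(f ⊗ g) x ≠ 0` while `|f ⊗ g| ≤ 1` on `A ⊗ B`, hence on its convex hull. A linear functional
that is bounded on a subspace vanishes there, so no nonzero subspace fits in that hull.
-/

open scoped Pointwise

/-- A convex vector space bornology on a real vector space `V`. -/
structure VecBornology (V : Type*) [AddCommGroup V] [Module ℝ V] where
  IsBounded : Set V → Prop
  subset_mem : ∀ {A B : Set V}, A ⊆ B → IsBounded B → IsBounded A
  union_mem : ∀ {A B : Set V}, IsBounded A → IsBounded B → IsBounded (A ∪ B)
  singleton_mem : ∀ v : V, IsBounded {v}
  add_mem : ∀ {A B : Set V}, IsBounded A → IsBounded B → IsBounded (A + B)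
  smul_mem : ∀ (c : ℝ) {A : Set V}, IsBounded A → IsBounded (c • A)
  balancedHull_mem : ∀ {A : Set V}, IsBounded A → IsBounded (balancedHull ℝ A)
  convexHull_mem : ∀ {A : Set V}, IsBounded A → IsBounded (convexHull ℝ A)

/-- Mackey convergence of a sequence `u` to `v` with respect to a collection of
bounded sets: there is a bounded disk `D` such that for every `ε > 0` eventually
`u n - v ∈ ε • D`. -/
def MackeyConvTo {V : Type*} [AddCommGroup V] [Module ℝ V]
    (Bdd : Set V → Prop) (u : ℕ → V) (v : V) : Prop :=
  ∃ D : Set V, Bdd D ∧ Balanced ℝ D ∧ Convex ℝ D ∧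
    ∀ ε : ℝ, 0 < ε → ∃ N : ℕ, ∀ n ≥ N, u n - v ∈ ε • D

section Functionals

variable {E : Type*} [AddCommGroup E] [Module ℝ E]

theorem Seminorm.exists_dual_eq_abs_le (p : Seminorm ℝ E) (x : E) :
    ∃ g : Module.Dual ℝ E, g x = p x ∧ ∀ y, |g y| ≤ p y := by
  rcases eq_or_ne x 0 with rfl | hx
  · exact ⟨0, by simp, fun y => by simp⟩
  obtain ⟨g, hg, hgp⟩ := Module.Dual.exists_extension_of_le_seminorm_real (ℝ ∙ x)
    (p x • (LinearEquiv.coord ℝ E x hx).toLinearMap) (p := p) fun y => by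
      conv_rhs => rw [← LinearEquiv.coord_apply_smul ℝ E x hx y]
      rw [map_smul_eq_mul, Real.norm_eq_abs, LinearMap.smul_apply, smul_eq_mul, mul_comm]
      exact mul_le_mul_of_nonneg_right (le_abs_self _) (apply_nonneg p x)
  refine ⟨g, ?_, hgp⟩
  have := hg ⟨x, Submodule.mem_span_singleton_self x⟩
  simpa [LinearEquiv.coord_self] using this

theorem exists_pos_mem_smul_of_mem_span {D : Set E} (hc : Convex ℝ D) (hb : Balanced ℝ D)
    (h0 : (0 : E) ∈ D) {x : E} (hx : x ∈ Submodule.span ℝ D) : ∃ r : ℝ, 0 < r ∧ x ∈ r • D := by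
  induction hx using Submodule.span_induction with
  | mem x hx => exact ⟨1, one_pos, by rwa [one_smul]⟩
  | zero => exact ⟨1, one_pos, by rwa [one_smul]⟩
  | add x y _ _ hx hy =>
    obtain ⟨r, hr, hxr⟩ := hx
    obtain ⟨s, hs, hys⟩ := hy
    exact ⟨r + s, by positivity, by rw [hc.add_smul hr.le hs.le]; exact Set.add_mem_add hxr hys⟩
  | smul c x _ hx =>
    obtain ⟨r, hr, hxr⟩ := hx
    refine ⟨(|c| + 1) * r, by positivity, hb.smul_mono ?_ (by
      rw [mul_smul]; exact Set.smul_mem_smul_set hxr)⟩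
    simp only [norm_mul, Real.norm_eq_abs, abs_of_pos hr, abs_of_pos (by positivity : 0 < |c| + 1)]
    gcongr
    linarith

theorem absorbent_preimage_subtype_span {D : Set E} (hc : Convex ℝ D) (hb : Balanced ℝ D)
    (h0 : (0 : E) ∈ D) : Absorbent ℝ ((Submodule.span ℝ D).subtype ⁻¹' D) := by
  rintro ⟨x, hx⟩
  obtain ⟨r, hr, d, hd, rfl⟩ := exists_pos_mem_smul_of_mem_span hc hb h0 hx
  refine absorbs_iff_norm.2 ⟨r, fun c hc => Set.singleton_subset_iff.2 ?_⟩
  obtain ⟨d', hd', hd'd⟩ := hb.smul_mono (a := r) (b := c) (by rwa [Real.norm_of_nonneg hr.le])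
    (Set.smul_mem_smul_set hd)
  refine ⟨⟨d', Submodule.subset_span hd'⟩, hd', Subtype.ext ?_⟩
  simpa using hd'd

theorem span_singleton_subset_of_gauge_eq_zero {s : Set E} (hc : Convex ℝ s) (hb : Balanced ℝ s)
    (ha : Absorbent ℝ s) {x : E} (hx : gauge s x = 0) : (ℝ ∙ x : Set E) ⊆ s := by
  intro y hy
  obtain ⟨t, rfl⟩ := Submodule.mem_span_singleton.1 hy
  refine setOfPred_gauge_lt_one_subset_self hc ha.zero_mem ha ?_
  simp [gauge_smul hb, hx]

theorem exists_dual_ne_zero_abs_le_one {D : Set E} (hc : Convex ℝ D) (hb : Balanced ℝ D)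
    (h0 : (0 : E) ∈ D) {v : E} (hv : v ∈ Submodule.span ℝ D) (hline : ¬ (ℝ ∙ v : Set E) ⊆ D) :
    ∃ f : Module.Dual ℝ E, f v ≠ 0 ∧ ∀ d ∈ D, |f d| ≤ 1 := by
  set S := Submodule.span ℝ D
  set s : Set S := S.subtype ⁻¹' D
  have hsc : Convex ℝ s := hc.linear_preimage S.subtype
  have hsb : Balanced ℝ s := hb.mulActionHom_preimage S.subtype.toMulActionHom
  have hsa : Absorbent ℝ s := absorbent_preimage_subtype_span hc hb h0
  obtain ⟨g, hgv, hg⟩ := (gaugeSeminorm hsb hsc hsa).exists_dual_eq_abs_le ⟨v, hv⟩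
  obtain ⟨f, hfg⟩ := LinearMap.exists_extend g
  have hf : ∀ (x : E) (hx : x ∈ S), f x = g ⟨x, hx⟩ := fun x hx => congr($hfg ⟨x, hx⟩)
  refine ⟨f, fun hfv => hline ?_, fun d hd => ?_⟩
  · have hgauge : gauge s ⟨v, hv⟩ = 0 := by rw [← hf v hv] at hgv; exact hgv.symm.trans hfv
    intro y hy
    obtain ⟨t, rfl⟩ := Submodule.mem_span_singleton.1 hy
    exact span_singleton_subset_of_gauge_eq_zero hsc hsb hsa hgauge
      (Submodule.mem_span_singleton.2 ⟨t, rfl⟩)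
  · calc |f d| = |g ⟨d, Submodule.subset_span hd⟩| := by rw [hf]
      _ ≤ gauge s ⟨d, Submodule.subset_span hd⟩ := hg _
      _ ≤ 1 := gauge_le_one_of_mem hd

theorem Module.Dual.eq_zero_of_forall_mem_abs_le
    (φ : Module.Dual ℝ E) {p : Submodule ℝ E} {C : ℝ} (h : ∀ y ∈ p, |φ y| ≤ C) {x : E}
    (hx : x ∈ p) : φ x = 0 := by
  by_contra hne
  have := h (((C + 1) / φ x) • x) (p.smul_mem _ hx)
  rw [map_smul, smul_eq_mul, div_mul_cancel₀ _ hne] at this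
  linarith [le_abs_self (C + 1)]

end Functionals

namespace VecBornology

variable {V : Type*} [AddCommGroup V] [Module ℝ V]

theorem exists_dual_abs_le_one_ne_zero (β : VecBornology V)
    (hβ : ∀ p : Submodule ℝ V, β.IsBounded (p : Set V) → p = ⊥) {A : Set V} (hA : β.IsBounded A)
    {v : V} (hv : v ≠ 0) : ∃ f : Module.Dual ℝ V, (∀ a ∈ A, |f a| ≤ 1) ∧ f v ≠ 0 := by
  set D := convexHull ℝ (balancedHull ℝ (insert v A))
  have hD : β.IsBounded D :=
    β.convexHull_mem (β.balancedHull_mem (by simpa using β.union_mem (β.singleton_mem v) hA))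
  have hsub : insert v A ⊆ D := (subset_balancedHull ℝ).trans (subset_convexHull ℝ _)
  have hb : Balanced ℝ D := (balancedHull.balanced _).convexHull
  have hline : ¬ (ℝ ∙ v : Set V) ⊆ D := fun h =>
    hv (Submodule.span_singleton_eq_bot.1 (hβ _ (β.subset_mem h hD)))
  have hvD : v ∈ D := hsub (Set.mem_insert v A)
  obtain ⟨f, hfv, hfD⟩ := exists_dual_ne_zero_abs_le_one (convex_convexHull ℝ _) hb
    (hb.zero_mem ⟨v, hvD⟩) (Submodule.subset_span hvD) hline
  exact ⟨f, fun a ha => hfD a (hsub (Set.mem_insert_of_mem v ha)), hfv⟩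

end VecBornology

namespace TensorProduct

section Field

variable {K V W : Type*} [Field K] [AddCommGroup V] [Module K V] [AddCommGroup W] [Module K W]

theorem exists_rTensor_ne_zero {P : Module.Dual K V → Prop}
    (hP : ∀ v : V, v ≠ 0 → ∃ f, P f ∧ f v ≠ 0) {x : V ⊗[K] W} (hx : x ≠ 0) :
    ∃ f, P f ∧ f.rTensor W x ≠ 0 := by
  let b := Module.Free.chooseBasis K W
  obtain ⟨c, rfl⟩ := eq_repr_basis_right b x
  obtain ⟨i, hi⟩ : ∃ i, c i ≠ 0 := by
    by_contra! h
    exact hx (by simp [show c = 0 from Finsupp.ext h])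
  obtain ⟨f, hf, hfi⟩ := hP (c i) hi
  refine ⟨f, hf, fun h => hfi ?_⟩
  -- `rTensor f` acts on the coefficients of `x` in the basis `b`
  have : ((c.mapRange f (map_zero f)).sum fun i m => m ⊗ₜ[K] b i) = 0 := by
    rw [← h, Finsupp.sum_mapRange_index (by simp)]
    simp [Finsupp.sum, map_sum]
  simpa using congr($(sum_tmul_basis_right_eq_zero b _ this) i)

theorem exists_dualDistrib_ne_zero {P : Module.Dual K V → Prop} {Q : Module.Dual K W → Prop}
    (hP : ∀ v : V, v ≠ 0 → ∃ f, P f ∧ f v ≠ 0) (hQ : ∀ w : W, w ≠ 0 → ∃ g, Q g ∧ g w ≠ 0)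
    {x : V ⊗[K] W} (hx : x ≠ 0) : ∃ f g, P f ∧ Q g ∧ dualDistrib K V W (f ⊗ₜ g) x ≠ 0 := by
  obtain ⟨f, hf, hfx⟩ := exists_rTensor_ne_zero hP hx
  obtain ⟨g, hg, hgx⟩ := hQ _ ((TensorProduct.lid K W).map_ne_zero_iff.2 hfx)
  refine ⟨f, g, hf, hg, ?_⟩
  have hfg : ∀ z, dualDistrib K V W (f ⊗ₜ g) z = g (TensorProduct.lid K W (f.rTensor W z)) := by
    intro z
    induction z with
    | zero => simp
    | tmul v w => simp
    | add x y hx hy => simp [hx, hy]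
  rwa [hfg]

end Field

theorem abs_dualDistrib_le_one_of_mem_convexHull {V W : Type*} [AddCommGroup V]
    [Module ℝ V] [AddCommGroup W] [Module ℝ W] {A : Set V} {B : Set W} {f : Module.Dual ℝ V}
    {g : Module.Dual ℝ W} (hf : ∀ a ∈ A, |f a| ≤ 1) (hg : ∀ b ∈ B, |g b| ≤ 1) {z : V ⊗[ℝ] W}
    (hz : z ∈ convexHull ℝ (Set.image2 (· ⊗ₜ[ℝ] ·) A B)) :
    |dualDistrib ℝ V W (f ⊗ₜ g) z| ≤ 1 := by
  set φ := dualDistrib ℝ V W (f ⊗ₜ g)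
  have himage : φ '' Set.image2 (· ⊗ₜ[ℝ] ·) A B ⊆ Set.Icc (-1) 1 := by
    rintro _ ⟨_, ⟨a, ha, b, hb, rfl⟩, rfl⟩
    rw [Set.mem_Icc, ← abs_le, dualDistrib_apply, abs_mul]
    exact mul_le_one₀ (hf a ha) (abs_nonneg _) (hg b hb)
  have hφz : φ z ∈ convexHull ℝ (φ '' Set.image2 (· ⊗ₜ[ℝ] ·) A B) := by
    rw [← φ.image_convexHull]
    exact Set.mem_image_of_mem φ hz
  exact abs_le.2 (convexHull_min himage (convex_Icc _ _) hφz)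

end TensorProduct

open TensorProduct in
/-- The tensor product of two separated convex bornological vector spaces, with
the tensor product bornology, is separated: every vector subspace that is
bounded (i.e. contained in the convex hull of the image of a product of bounded
sets under the canonical bilinear map) is zero. -/
theorem stmt_4 {V W : Type*} [AddCommGroup V] [Module ℝ V] [AddCommGroup W] [Module ℝ W]
    (βV : VecBornology V) (βW : VecBornology W)
    (hV : ∀ p : Submodule ℝ V, βV.IsBounded (p : Set V) → p = ⊥)
    (hW : ∀ p : Submodule ℝ W, βW.IsBounded (p : Set W) → p = ⊥) :
    ∀ p : Submodule ℝ (V ⊗[ℝ] W),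
      (∃ (A : Set V) (B : Set W), βV.IsBounded A ∧ βW.IsBounded B ∧
        (p : Set (V ⊗[ℝ] W)) ⊆ convexHull ℝ (Set.image2 (fun v w => v ⊗ₜ[ℝ] w) A B)) →
      p = ⊥ := by
  rintro p ⟨A, B, hA, hB, hpAB⟩
  refine (Submodule.eq_bot_iff p).2 fun x hx => ?_
  by_contra hx0
  obtain ⟨f, g, hfA, hgB, hfgx⟩ := exists_dualDistrib_ne_zero
    (fun v hv => βV.exists_dual_abs_le_one_ne_zero hV hA hv)
    (fun w hw => βW.exists_dual_abs_le_one_ne_zero hW hB hw) hx0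
  exact hfgx <| Module.Dual.eq_zero_of_forall_mem_abs_le _
    (fun y hy => abs_dualDistrib_le_one_of_mem_convexHull hfA hgB (hpAB hy)) hx
end

section
/- The tensor product with a fixed convex bornological vector space V is left adjoint to the inner hom: for convex bornological vector spaces U, V, W there is a natural bijection between bounded linear maps U ⊗ V → W (with the tensor product bornology on U ⊗ V) and bounded linear maps U → Hom(V, W) (with the equibounded bornology on Hom(V, W)), given by currying. -/
open scoped Pointwise

namespace TensorProduct

theorem image_lift_image2_tmul {R M N P : Type*} [CommSemiring R]
    [AddCommMonoid M] [Module R M] [AddCommMonoid N] [Module R N] [AddCommMonoid P] [Module R P]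
    (g : M →ₗ[R] N →ₗ[R] P) (A : Set M) (B : Set N) :
    lift g '' Set.image2 (fun u v => u ⊗ₜ[R] v) A B = {w | ∃ u ∈ A, ∃ v ∈ B, w = g u v} := by
  ext w
  simp [Set.image_image2, eq_comm]

end TensorProduct

namespace VecBornology

open TensorProduct

variable {U V W : Type*} [AddCommGroup U] [Module ℝ U] [AddCommGroup V] [Module ℝ V]
  [AddCommGroup W] [Module ℝ W]

theorem isBounded_image_convexHull (βW : VecBornology W) (f : V →ₗ[ℝ] W) {T : Set V}
    (hT : βW.IsBounded (f '' T)) : βW.IsBounded (f '' convexHull ℝ T) := by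
  rw [f.image_convexHull]
  exact βW.convexHull_mem hT

theorem isBounded_lift_iff (βU : VecBornology U) (βV : VecBornology V) (βW : VecBornology W)
    (g : U →ₗ[ℝ] V →ₗ[ℝ] W) :
    (∀ (A : Set U) (B : Set V), βU.IsBounded A → βV.IsBounded B →
        βW.IsBounded {w | ∃ u ∈ A, ∃ v ∈ B, w = g u v}) ↔
      ∀ S : Set (U ⊗[ℝ] V),
        (∃ (A : Set U) (B : Set V), βU.IsBounded A ∧ βV.IsBounded B ∧
          S ⊆ convexHull ℝ (Set.image2 (fun u v => u ⊗ₜ[ℝ] v) A B)) →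
        βW.IsBounded (lift g '' S) := by
  constructor
  · rintro hg S ⟨A, B, hA, hB, hS⟩
    refine βW.subset_mem (Set.image_mono hS) (isBounded_image_convexHull βW _ ?_)
    rw [image_lift_image2_tmul]
    exact hg A B hA hB
  · intro hf A B hA hB
    rw [← image_lift_image2_tmul]
    exact hf _ ⟨A, B, hA, hB, subset_convexHull ℝ _⟩

end VecBornology

open TensorProduct in
/-- Tensor-hom adjunction for bornological vector spaces: currying gives a
bijection between bounded linear maps `U ⊗ V → W` (tensor product bornology)
and bounded linear maps `U → Hom(V, W)` (equibounded bornology). -/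
theorem stmt_7 {U V W : Type*} [AddCommGroup U] [Module ℝ U] [AddCommGroup V] [Module ℝ V]
    [AddCommGroup W] [Module ℝ W]
    (βU : VecBornology U) (βV : VecBornology V) (βW : VecBornology W) :
    ∃ e : {f : U ⊗[ℝ] V →ₗ[ℝ] W //
            ∀ S : Set (U ⊗[ℝ] V),
              (∃ (A : Set U) (B : Set V), βU.IsBounded A ∧ βV.IsBounded B ∧
                S ⊆ convexHull ℝ (Set.image2 (fun u v => u ⊗ₜ[ℝ] v) A B)) →
              βW.IsBounded (f '' S)} ≃
        {g : U →ₗ[ℝ] V →ₗ[ℝ] W //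
            ∀ (A : Set U) (B : Set V), βU.IsBounded A → βV.IsBounded B →
              βW.IsBounded {w | ∃ u ∈ A, ∃ v ∈ B, w = g u v}},
      ∀ (f : {f : U ⊗[ℝ] V →ₗ[ℝ] W //
            ∀ S : Set (U ⊗[ℝ] V),
              (∃ (A : Set U) (B : Set V), βU.IsBounded A ∧ βV.IsBounded B ∧
                S ⊆ convexHull ℝ (Set.image2 (fun u v => u ⊗ₜ[ℝ] v) A B)) →
              βW.IsBounded (f '' S)}) (u : U) (v : V),
        (e f).1 u v = f.1 (u ⊗ₜ[ℝ] v) :=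
  ⟨(Equiv.subtypeEquiv (lift.equiv (RingHom.id ℝ) U V W).toEquiv
      (VecBornology.isBounded_lift_iff βU βV βW)).symm, fun _ _ _ => rfl⟩
end

section
/- The sequence of functionals f ↦ ∫_{ℝ^d} f ε_n dy Mackey converges, in the space of bounded linear functionals on compactly supported smooth functions with the equibounded bornology, to the Dirac evaluation δ_0 : f ↦ f(0). Concretely: there is an equibounded set D of functionals with ∫(·)ε_n − δ_0 ∈ (1/n)·D for all n. -/
open MeasureTheory Filter
open scoped Pointwise

/-- The bornology of test functions on `ℝ^d`: a set `B` is bounded iff its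
elements are smooth and compactly supported, with supports contained in a fixed
compact set, and all `C^k`-seminorms uniformly bounded on `B`. -/
def TestBddE (d : ℕ) (B : Set (EuclideanSpace ℝ (Fin d) → ℝ)) : Prop :=
  (∀ f ∈ B, ContDiff ℝ (⊤ : ℕ∞) f ∧ HasCompactSupport f) ∧
  (∃ K : Set (EuclideanSpace ℝ (Fin d)), IsCompact K ∧ ∀ f ∈ B, tsupport f ⊆ K) ∧
  (∀ k : ℕ, ∃ C : ℝ, ∀ f ∈ B, ∀ y, ‖iteratedFDeriv ℝ k f y‖ ≤ C)

/-- The key mollifier estimate: `|n (∫ f εₙ − f 0)| ≤ C ∫ ‖z‖ ε z` whenever the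
derivative of `f` is globally bounded by `C`. -/
lemma key_est (d : ℕ) (ε : EuclideanSpace ℝ (Fin d) → ℝ)
    (hε_smooth : ContDiff ℝ (⊤ : ℕ∞) ε) (hε_supp : HasCompactSupport ε)
    (hε_nonneg : ∀ y, 0 ≤ ε y) (hε_int : ∫ y, ε y = 1)
    (n : ℕ) (hn : 1 ≤ n)
    (f : EuclideanSpace ℝ (Fin d) → ℝ) (hf : Continuous f)
    (hdf : Differentiable ℝ f) (C : ℝ)
    (hC : ∀ y, ‖fderiv ℝ f y‖ ≤ C) :
    |(n:ℝ) * ((∫ y, f y * ((n:ℝ)^d * ε ((n:ℝ)•y))) - f 0)| ≤ C * ∫ z, ‖z‖ * ε z := by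
  have hn0 : (0:ℝ) < (n:ℝ) := by exact_mod_cast hn
  have hn0' : (n:ℝ) ≠ 0 := ne_of_gt hn0
  have hεcont := hε_smooth.continuous
  have hεint : Integrable ε := hεcont.integrable_of_hasCompactSupport hε_supp
  have hC0 : 0 ≤ C := le_trans (norm_nonneg _) (hC 0)
  -- change of variables
  have hcov : (∫ y, f y * ((n:ℝ)^d * ε ((n:ℝ)•y)))
      = ∫ z, f ((n:ℝ)⁻¹ • z) * ε z := by
    have h := MeasureTheory.Measure.integral_comp_smul (volume)
      (fun z => f ((n:ℝ)⁻¹ • z) * ε z) (n:ℝ)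
    simp only [inv_smul_smul₀ hn0', finrank_euclideanSpace_fin] at h
    rw [abs_of_nonneg (by positivity : (0:ℝ) ≤ ((n:ℝ)^d)⁻¹), smul_eq_mul] at h
    have : (∫ y, f y * ((n:ℝ)^d * ε ((n:ℝ)•y)))
        = (n:ℝ)^d * ∫ y, f y * ε ((n:ℝ)•y) := by
      rw [← MeasureTheory.integral_const_mul]
      congr 1; funext y; ring
    rw [this, h]
    field_simp
  have hδ : f 0 = ∫ z, f 0 * ε z := by
    rw [MeasureTheory.integral_const_mul, hε_int, mul_one]
  -- the difference integrand
  set g : EuclideanSpace ℝ (Fin d) → ℝ :=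
    fun z => (f ((n:ℝ)⁻¹ • z) - f 0) * ε z with hg
  have hgcont : Continuous g := by fun_prop
  have hgsupp : HasCompactSupport g := by
    apply HasCompactSupport.mul_left hε_supp
  have hgint : Integrable g := hgcont.integrable_of_hasCompactSupport hgsupp
  have hint1 : Integrable (fun z => f ((n:ℝ)⁻¹ • z) * ε z) := by
    have : (fun z => f ((n:ℝ)⁻¹ • z) * ε z) = fun z => g z + f 0 * ε z := by
      funext z; simp [hg]; ring
    rw [this]; exact hgint.add (hεint.const_mul _)
  have hdiff : (∫ y, f y * ((n:ℝ)^d * ε ((n:ℝ)•y))) - f 0 = ∫ z, g z := by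
    rw [hcov, hδ, ← MeasureTheory.integral_sub hint1 (hεint.const_mul _)]
    congr 1; funext z; simp [hg]; ring
  rw [hdiff]
  -- bound
  have hnormε : Integrable (fun z => ‖z‖ * ε z) := by
    apply Continuous.integrable_of_hasCompactSupport (by fun_prop)
    exact HasCompactSupport.mul_left hε_supp
  have hbd : ∀ z, |g z| ≤ (n:ℝ)⁻¹ * (C * (‖z‖ * ε z)) := by
    intro z
    have hmv : ‖f ((n:ℝ)⁻¹ • z) - f 0‖ ≤ C * ‖(n:ℝ)⁻¹ • z - 0‖ := by
      apply Convex.norm_image_sub_le_of_norm_fderiv_le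
        (fun x _ => hdf x) (fun x _ => hC x) convex_univ (Set.mem_univ _) (Set.mem_univ _)
    rw [sub_zero, norm_smul] at hmv
    simp only [norm_inv, Real.norm_natCast] at hmv
    have : |g z| = ‖f ((n:ℝ)⁻¹ • z) - f 0‖ * ε z := by
      rw [hg]; simp only [abs_mul, Real.norm_eq_abs, abs_of_nonneg (hε_nonneg z)]
    rw [this]
    calc ‖f ((n:ℝ)⁻¹ • z) - f 0‖ * ε z ≤ (C * ((n:ℝ)⁻¹ * ‖z‖)) * ε z :=
          mul_le_mul_of_nonneg_right hmv (hε_nonneg z)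
      _ = (n:ℝ)⁻¹ * (C * (‖z‖ * ε z)) := by ring
  have habs : |∫ z, g z| ≤ ∫ z, (n:ℝ)⁻¹ * (C * (‖z‖ * ε z)) := by
    calc |∫ z, g z| ≤ ∫ z, |g z| := by
          simpa [Real.norm_eq_abs] using norm_integral_le_integral_norm g
      _ ≤ ∫ z, (n:ℝ)⁻¹ * (C * (‖z‖ * ε z)) := by
          apply integral_mono hgint.abs ((hnormε.const_mul C).const_mul _) hbd
  rw [abs_mul, abs_of_nonneg hn0.le]
  rw [MeasureTheory.integral_const_mul, MeasureTheory.integral_const_mul] at habs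
  calc (n:ℝ) * |∫ z, g z| ≤ (n:ℝ) * ((n:ℝ)⁻¹ * (C * ∫ z, ‖z‖ * ε z)) :=
        mul_le_mul_of_nonneg_left habs hn0.le
    _ = C * ∫ z, ‖z‖ * ε z := by field_simp

/-- The mollified integration functionals `f ↦ ∫ f ε_n` Mackey converge to the
Dirac functional `δ_0 : f ↦ f 0` in the equibounded bornology: there is an
equibounded set `D` of functionals with `∫(·)ε_n − δ_0 ∈ (1/n) • D` for all
`n ≥ 1`. -/
theorem stmt_9 (d : ℕ) (ε : EuclideanSpace ℝ (Fin d) → ℝ)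
    (hε_smooth : ContDiff ℝ (⊤ : ℕ∞) ε) (hε_supp : HasCompactSupport ε)
    (hε_nonneg : ∀ y, 0 ≤ ε y) (hε_int : ∫ y, ε y = 1) :
    ∃ D : Set ((EuclideanSpace ℝ (Fin d) → ℝ) → ℝ),
      (∀ B : Set (EuclideanSpace ℝ (Fin d) → ℝ), TestBddE d B →
        Bornology.IsBounded {r : ℝ | ∃ L ∈ D, ∃ f ∈ B, r = L f}) ∧
      ∀ n : ℕ, 1 ≤ n →
        (fun f : EuclideanSpace ℝ (Fin d) → ℝ =>
            ∫ y, f y * ((n : ℝ) ^ d * ε ((n : ℝ) • y))) - (fun f => f 0) ∈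
          ((1 : ℝ) / (n : ℝ)) • D := by
  set Fn : ℕ → (EuclideanSpace ℝ (Fin d) → ℝ) → ℝ :=
    fun n f => ∫ y, f y * ((n:ℝ)^d * ε ((n:ℝ) • y)) with hFn
  set δ : (EuclideanSpace ℝ (Fin d) → ℝ) → ℝ := fun f => f 0 with hδ
  refine ⟨{L | ∃ n : ℕ, 1 ≤ n ∧ L = (n:ℝ) • (Fn n - δ)}, ?_, ?_⟩
  · intro B hB
    obtain ⟨hreg, -, hsem⟩ := hB
    obtain ⟨C, hC⟩ := hsem 1
    rw [isBounded_iff_forall_norm_le]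
    refine ⟨C * ∫ z, ‖z‖ * ε z, ?_⟩
    rintro r ⟨L, ⟨m, hm, rfl⟩, f, hfB, rfl⟩
    obtain ⟨hfsm, hfcs⟩ := hreg f hfB
    have hfd : ∀ y, ‖fderiv ℝ f y‖ ≤ C := by
      intro y
      have h1 : ‖fderiv ℝ f y‖ = ‖iteratedFDeriv ℝ 1 f y‖ := by
        rw [← norm_iteratedFDeriv_fderiv (n := 0), norm_iteratedFDeriv_zero]
      rw [h1]; exact hC f hfB y
    have := key_est d ε hε_smooth hε_supp hε_nonneg hε_int m hm f
      hfsm.continuous (hfsm.differentiable (by simp)) C hfd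
    simpa [Real.norm_eq_abs, Pi.smul_apply, Pi.sub_apply, smul_eq_mul, hFn, hδ, abs_mul,
      abs_of_nonneg (by positivity : (0:ℝ) ≤ (m:ℝ))] using this
  · intro n hn
    have hn0 : (n:ℝ) ≠ 0 := by
      exact_mod_cast Nat.one_le_iff_ne_zero.mp hn
    refine ⟨(n:ℝ) • (Fn n - δ), ⟨n, hn, rfl⟩, ?_⟩
    show ((1:ℝ)/(n:ℝ)) • ((n:ℝ) • (Fn n - δ)) = _
    rw [smul_smul, one_div, inv_mul_cancel₀ hn0, one_smul]
end

section
/- Let θ be irrational and consider the smooth noncommutative torus 𝒜_θ, the dense unital *-subalgebra (or its bornological completion) generated by unitaries u, v with v u = e^{2πiθ} u v. The averaging operators Φ₁(a) = lim_{n→∞} (1/(2n+1)) Σ_{j=−n}^{n} u^j a u^{−j} and Φ₂(a) = lim_{n→∞} (1/(2n+1)) Σ_{j=−n}^{n} v^j a v^{−j} are well-defined on finite sums a = Σ_k δ_k ⊗ a_k, and their composite sends a to δ_0 ⊗ ∫_{S¹} a_0. Consequently, any nonzero closed two-sided ideal I of 𝒜_θ contains an invertible element, so 𝒜_θ is simple.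 -/
open Filter

/-- Smooth `1`-periodic functions `ℝ → ℂ`, i.e. smooth functions on the circle. -/
noncomputable def SmoothPeriodic : Submodule ℂ (ℝ → ℂ) where
  carrier := {f | ContDiff ℝ (⊤ : ℕ∞) f ∧ Function.Periodic f 1}
  add_mem' := fun hf hg => ⟨hf.1.add hg.1, hf.2.add hg.2⟩
  zero_mem' := ⟨contDiff_const, fun _ => rfl⟩
  smul_mem' := fun c f hf => ⟨hf.1.const_smul c, fun x => by
    simp only [Pi.smul_apply, hf.2 x]⟩

/-- The underlying vector space of the smooth noncommutative torus:
finitely supported families `(a_k)_{k ∈ ℤ}` of smooth functions on the circle,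
representing `Σ_k δ_k ⊗ a_k` in `C^∞(S¹) ⋊ ℤ`. -/
abbrev NCTorus : Type := ℤ →₀ ↥SmoothPeriodic

/-- The constant function `1` on the circle. -/
noncomputable def onePer : ↥SmoothPeriodic := ⟨fun _ => 1, contDiff_const, fun _ => rfl⟩

/-- The character `t ↦ e^{2πijt}` on the circle. -/
noncomputable def expPer (j : ℤ) : ↥SmoothPeriodic :=
  ⟨fun t => Complex.exp (2 * Real.pi * Complex.I * (j : ℂ) * (t : ℂ)), by
    constructor
    · exact Complex.contDiff_exp.comp (contDiff_const.mul Complex.ofRealCLM.contDiff)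
    · intro t
      push_cast
      rw [mul_add, Complex.exp_add]
      have h1 : 2 * (Real.pi : ℂ) * Complex.I * (j : ℂ) * 1 =
          (j : ℂ) * (2 * Real.pi * Complex.I) := by ring
      rw [h1, Complex.exp_int_mul_two_pi_mul_I, mul_one]⟩

/-- Mackey (smooth) closedness of a subspace of the noncommutative torus: it is
closed under limits of sequences with uniformly finite support whose
components converge uniformly together with all derivatives. -/
def MackeyClosedNCT (I : Submodule ℂ NCTorus) : Prop :=
  ∀ (x : ℕ → NCTorus) (y : NCTorus), (∀ n, x n ∈ I) →
    (∃ S : Finset ℤ, ∀ n, (x n).support ⊆ S) →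
    (∀ (k : ℤ) (m : ℕ), TendstoUniformly (fun n t => iteratedDeriv m (↑(x n k) : ℝ → ℂ) t)
      (iteratedDeriv m (↑(y k) : ℝ → ℂ)) atTop) →
    y ∈ I


namespace NCT

open Filter Complex Finset Real MeasureTheory

lemma tu_congr {F G : ℕ → ℝ → ℂ} {f g : ℝ → ℂ}
    (hFG : ∀ n t, F n t = G n t) (hfg : ∀ t, f t = g t)
    (h : TendstoUniformly F f atTop) : TendstoUniformly G g atTop := by
  have h1 : F = G := funext fun n => funext (hFG n)
  have h2 : f = g := funext hfg
  rw [← h1, ← h2]; exact h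

lemma tendstoUniformly_of_factor (c : ℕ → ℂ) (γ : ℂ) (hc : Tendsto c atTop (nhds γ))
    (g : ℝ → ℂ) (C : ℝ) (hg : ∀ t, ‖g t‖ ≤ C) :
    TendstoUniformly (fun N t => c N * g t) (fun t => γ * g t) atTop := by
  rw [Metric.tendstoUniformly_iff]
  intro ε hε
  have hC : 0 ≤ C := le_trans (norm_nonneg _) (hg 0)
  have h0 : Tendsto (fun N => c N - γ) atTop (nhds 0) := by
    simpa using hc.sub (tendsto_const_nhds (x := γ))
  have h2 : Tendsto (fun N => ‖c N - γ‖ * C) atTop (nhds 0) := by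
    simpa using h0.norm.mul_const C
  filter_upwards [h2.eventually (gt_mem_nhds hε)] with N hN t
  rw [dist_eq_norm]
  calc ‖γ * g t - c N * g t‖ = ‖(γ - c N) * g t‖ := by ring_nf
    _ ≤ ‖γ - c N‖ * C := by
        rw [norm_mul]
        exact mul_le_mul_of_nonneg_left (hg t) (norm_nonneg _)
    _ = ‖c N - γ‖ * C := by rw [norm_sub_rev]
    _ < ε := hN

lemma per_bound (f : ℝ → ℂ) (hc : Continuous f) (hp : Function.Periodic f 1) :
    ∃ C : ℝ, ∀ t, ‖f t‖ ≤ C := by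
  obtain ⟨C, hC⟩ := (isCompact_Icc (a := (0:ℝ)) (b := 1)).exists_bound_of_continuousOn
    hc.continuousOn
  refine ⟨C, fun t => ?_⟩
  have h1 : f t = f (Int.fract t) := by
    have := hp.sub_int_mul_eq (x := t) (n := ⌊t⌋)
    rw [mul_one] at this
    rw [← this]; rfl
  rw [h1]
  exact hC _ ⟨Int.fract_nonneg t, (Int.fract_lt_one t).le⟩

lemma periodic_iteratedDeriv (f : ℝ → ℂ) (hp : Function.Periodic f 1) (m : ℕ) :
    Function.Periodic (iteratedDeriv m f) 1 := by
  intro x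
  have h1 : (fun z : ℝ => f (z + 1)) = f := funext fun z => hp z
  calc iteratedDeriv m f (x + 1) = iteratedDeriv m (fun z => f (z + 1)) x := by
        rw [iteratedDeriv_comp_add_const]
    _ = iteratedDeriv m f x := by rw [h1]

lemma iteratedDeriv_zero_fun (m : ℕ) : iteratedDeriv m (fun _ : ℝ => (0:ℂ)) = fun _ => 0 := by
  induction m with
  | zero => simp [iteratedDeriv_zero]
  | succ n ih =>
    rw [iteratedDeriv_succ, ih]
    funext t
    exact deriv_const t 0

lemma iteratedDeriv_const_fun (m : ℕ) (c : ℂ) (hm : m ≠ 0) :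
    iteratedDeriv m (fun _ : ℝ => c) = fun _ => 0 := by
  obtain ⟨n, rfl⟩ := Nat.exists_eq_succ_of_ne_zero hm
  rw [iteratedDeriv_succ']
  have : deriv (fun _ : ℝ => c) = fun _ => (0:ℂ) := funext fun t => deriv_const t c
  rw [this, iteratedDeriv_zero_fun]

lemma iter_smul (c : ℂ) (f : ℝ → ℂ) (hf : ContDiff ℝ (⊤ : ℕ∞) f) (m : ℕ) :
    iteratedDeriv m (c • f) = c • iteratedDeriv m f := by
  funext x
  simp only [← iteratedDerivWithin_univ]
  rw [iteratedDerivWithin_const_smul (Set.mem_univ x) uniqueDiffOn_univ c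
    ((hf.of_le (by exact_mod_cast le_top)).contDiffWithinAt)]
  rfl

lemma iter_sum {ι : Type*} (s : Finset ι) (f : ι → ℝ → ℂ) (hf : ∀ i, ContDiff ℝ (⊤ : ℕ∞) (f i)) (m : ℕ) :
    iteratedDeriv m (fun t => ∑ i ∈ s, f i t) = fun t => ∑ i ∈ s, iteratedDeriv m (f i) t := by
  classical
  induction s using Finset.induction_on with
  | empty => simp [iteratedDeriv_zero_fun]
  | insert a s' hnot ih =>
    have h1 : (fun t => ∑ i ∈ insert a s', f i t) = f a + fun t => ∑ i ∈ s', f i t := by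
      funext t; simp [Finset.sum_insert hnot]
    rw [h1]
    funext x
    have hsum : ContDiff ℝ (⊤ : ℕ∞) (fun t => ∑ i ∈ s', f i t) := by
      apply ContDiff.sum; intro i _; exact hf i
    simp only [← iteratedDerivWithin_univ]
    rw [iteratedDerivWithin_add (Set.mem_univ x) uniqueDiffOn_univ
      ((hf a).of_le (by exact_mod_cast le_top)).contDiffWithinAt (hsum.of_le (by exact_mod_cast le_top)).contDiffWithinAt]
    simp only [iteratedDerivWithin_univ]
    rw [ih]
    simp [Finset.sum_insert hnot]

lemma iter_translate (f : ℝ → ℂ) (c : ℝ) (m : ℕ) :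
    iteratedDeriv m (fun t => f (t - c)) = fun t => iteratedDeriv m f (t - c) := by
  have h1 : (fun t : ℝ => f (t - c)) = fun t => f (t + (-c)) := by
    funext t; rw [sub_eq_add_neg]
  rw [h1, iteratedDeriv_comp_add_const]
  funext t; rw [sub_eq_add_neg]


lemma geom_telescope (z : ℂ) (hz : z ≠ 0) (N : ℕ) :
    (z - 1) * ∑ j ∈ Finset.Icc (-(N:ℤ)) (N:ℤ), z ^ j = z ^ ((N:ℤ)+1) - z ^ (-(N:ℤ)) := by
  induction N with
  | zero => simp
  | succ n ih =>
    have hsplit : Finset.Icc (-(n+1:ℤ)) (n+1:ℤ) =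
        insert (-(n+1:ℤ)) (insert ((n:ℤ)+1) (Finset.Icc (-(n:ℤ)) (n:ℤ))) := by
      ext x
      simp only [Finset.mem_Icc, Finset.mem_insert]
      omega
    have h1 : ((n:ℤ)+1) ∉ Finset.Icc (-(n:ℤ)) (n:ℤ) := by simp
    have h2 : (-(n+1:ℤ)) ∉ insert ((n:ℤ)+1) (Finset.Icc (-(n:ℤ)) (n:ℤ)) := by
      simp only [Finset.mem_insert, Finset.mem_Icc]
      omega
    push_cast [hsplit, Finset.sum_insert h2, Finset.sum_insert h1]
    rw [mul_add, mul_add, ih]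
    have e1 : z ^ (-(n:ℤ)) = z ^ (-((n:ℤ)+1)) * z := by
      rw [← zpow_add_one₀ hz]; congr 1; ring
    have e2 : z ^ ((n:ℤ)+1+1) = z ^ ((n:ℤ)+1) * z := zpow_add_one₀ hz _
    rw [e1, e2]; ring

lemma dirichlet_bound (z : ℂ) (h1 : ‖z‖ = 1) (hz : z ≠ 1) (N : ℕ) :
    ‖∑ j ∈ Finset.Icc (-(N:ℤ)) (N:ℤ), z ^ j‖ ≤ 2 / ‖z - 1‖ := by
  have hz0 : z ≠ 0 := by intro h; rw [h] at h1; simp at h1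
  have hd : ‖z - 1‖ ≠ 0 := by
    simp only [ne_eq, norm_eq_zero, sub_eq_zero]; exact hz
  have hkey := geom_telescope z hz0 N
  have : ∑ j ∈ Finset.Icc (-(N:ℤ)) (N:ℤ), z ^ j = (z ^ ((N:ℤ)+1) - z ^ (-(N:ℤ))) / (z - 1) := by
    rw [eq_div_iff (by simpa [sub_eq_zero] using hz)]
    rw [mul_comm] at hkey; exact hkey
  rw [this, norm_div]
  have hpos : (0:ℝ) < ‖z - 1‖ := lt_of_le_of_ne (norm_nonneg _) (Ne.symm hd)
  gcongr
  calc ‖z ^ ((N:ℤ)+1) - z ^ (-(N:ℤ))‖ ≤ ‖z ^ ((N:ℤ)+1)‖ + ‖z ^ (-(N:ℤ))‖ := norm_sub_le _ _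
    _ = 2 := by rw [norm_zpow, norm_zpow, h1]; norm_num

lemma avg_tendsto_zero (z : ℂ) (h1 : ‖z‖ = 1) (hz : z ≠ 1) :
    Tendsto (fun N : ℕ => (2*(N:ℂ)+1)⁻¹ * ∑ j ∈ Finset.Icc (-(N:ℤ)) (N:ℤ), z ^ j)
      atTop (nhds 0) := by
  apply squeeze_zero_norm (a := fun N : ℕ => (2*(N:ℝ)+1)⁻¹ * (2 / ‖z - 1‖))
  · intro N
    rw [norm_mul]
    apply mul_le_mul ?_ (dirichlet_bound z h1 hz N) (norm_nonneg _) (by positivity)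
    rw [norm_inv]
    apply le_of_eq
    congr 1
    have : (2*(N:ℂ)+1) = ((2*(N:ℝ)+1 : ℝ) : ℂ) := by push_cast; ring
    rw [this, Complex.norm_real, Real.norm_of_nonneg (by positivity)]
  · have : Tendsto (fun N : ℕ => (2*(N:ℝ)+1)⁻¹) atTop (nhds 0) := by
      apply Tendsto.inv_tendsto_atTop
      apply Filter.Tendsto.atTop_add ?_ tendsto_const_nhds
      exact (tendsto_natCast_atTop_atTop).const_mul_atTop (by norm_num)
    simpa using this.mul_const (2 / ‖z - 1‖)

lemma card_Icc_int (N : ℕ) : (Finset.Icc (-(N:ℤ)) (N:ℤ)).card = 2*N+1 := by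
  rw [Int.card_Icc]
  omega

lemma twoN1_ne (N : ℕ) : (2*(N:ℂ)+1) ≠ 0 := by
  intro h
  have : ((2*(N:ℝ)+1 : ℝ) : ℂ) = 0 := by push_cast; linear_combination h
  rw [Complex.ofReal_eq_zero] at this
  have : (0:ℝ) < 2*(N:ℝ)+1 := by positivity
  simp_all

lemma avg_one (N : ℕ) : (2*(N:ℂ)+1)⁻¹ * ∑ _j ∈ Finset.Icc (-(N:ℤ)) (N:ℤ), (1:ℂ) = 1 := by
  rw [Finset.sum_const, card_Icc_int]
  rw [nsmul_eq_mul]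
  rw [inv_mul_eq_div, div_eq_one_iff_eq (twoN1_ne N)]
  push_cast; ring


lemma tu_add {F G : ℕ → ℝ → ℂ} {f g : ℝ → ℂ}
    (hF : TendstoUniformly F f atTop) (hG : TendstoUniformly G g atTop) :
    TendstoUniformly (fun n t => F n t + G n t) (fun t => f t + g t) atTop := by
  rw [Metric.tendstoUniformly_iff] at *
  intro ε hε
  filter_upwards [hF (ε/2) (by linarith), hG (ε/2) (by linarith)] with n h1 h2 t
  calc dist (f t + g t) (F n t + G n t) ≤ dist (f t) (F n t) + dist (g t) (G n t) :=
        dist_add_add_le _ _ _ _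
    _ < ε/2 + ε/2 := add_lt_add (h1 t) (h2 t)
    _ = ε := by ring

lemma tu_smul (c : ℂ) {F : ℕ → ℝ → ℂ} {f : ℝ → ℂ}
    (hF : TendstoUniformly F f atTop) :
    TendstoUniformly (fun n t => c * F n t) (fun t => c * f t) atTop := by
  rw [Metric.tendstoUniformly_iff] at *
  intro ε hε
  have hc : (0:ℝ) < ‖c‖ + 1 := by positivity
  filter_upwards [hF (ε/(‖c‖+1)) (by positivity)] with n h1 t
  have : dist (c * f t) (c * F n t) = ‖c‖ * dist (f t) (F n t) := by
    simp [dist_eq_norm, ← mul_sub, norm_mul]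
  rw [this]
  calc ‖c‖ * dist (f t) (F n t) ≤ ‖c‖ * (ε/(‖c‖+1)) := by
        apply mul_le_mul_of_nonneg_left (le_of_lt (h1 t)) (norm_nonneg _)
    _ < ε := by
        rw [div_eq_mul_inv, ← mul_assoc, ← div_eq_mul_inv, div_lt_iff₀ hc]
        nlinarith [norm_nonneg c]


lemma tu_const (f : ℝ → ℂ) : TendstoUniformly (fun _ : ℕ => f) f atTop := by
  rw [Metric.tendstoUniformly_iff]
  intro ε hε
  filter_upwards with n t
  simpa using hε

lemma norm_twoN1_inv (N : ℕ) : ‖(2*(N:ℂ)+1)⁻¹‖ = (2*(N:ℝ)+1)⁻¹ := by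
  rw [norm_inv]
  congr 1
  have : (2*(N:ℂ)+1) = ((2*(N:ℝ)+1 : ℝ) : ℂ) := by push_cast; ring
  rw [this, Complex.norm_real, Real.norm_of_nonneg (by positivity)]

lemma birkhoff_unif (θ : ℝ) (hθ : Irrational θ) (f : ℝ → ℂ)
    (hcont : Continuous f) (hper : Function.Periodic f 1) :
    TendstoUniformly
      (fun N : ℕ => fun t : ℝ =>
        (2*(N:ℂ)+1)⁻¹ * ∑ j ∈ Finset.Icc (-(N:ℤ)) (N:ℤ), f (t - (j:ℝ)*θ))
      (fun _ : ℝ => ∫ s in (0:ℝ)..1, f s) atTop := by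
  haveI : Fact ((0:ℝ) < 1) := ⟨one_pos⟩
  -- integrability of continuous maps on the circle
  have hInt : ∀ g : C(AddCircle (1:ℝ), ℂ),
      IntervalIntegrable (fun s : ℝ => g (s : AddCircle (1:ℝ))) MeasureTheory.volume 0 1 := by
    intro g
    have hc : Continuous fun s : ℝ => g ((s:ℝ) : AddCircle (1:ℝ)) :=
      g.continuous.comp (AddCircle.continuous_mk' 1)
    exact hc.intervalIntegrable 0 1
  -- the submodule of functions satisfying the uniform ergodic theorem
  set Q : C(AddCircle (1:ℝ), ℂ) → Prop := fun g =>
    TendstoUniformly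
      (fun N : ℕ => fun t : ℝ =>
        (2*(N:ℂ)+1)⁻¹ * ∑ j ∈ Finset.Icc (-(N:ℤ)) (N:ℤ),
          g ((t - (j:ℝ)*θ : ℝ) : AddCircle (1:ℝ)))
      (fun _ : ℝ => ∫ s in (0:ℝ)..1, g ((s:ℝ) : AddCircle (1:ℝ))) atTop with hQ
  have hadd : ∀ g₁ g₂, Q g₁ → Q g₂ → Q (g₁ + g₂) := by
    intro g₁ g₂ h1 h2
    refine tu_congr (fun N t => ?_) (fun t => ?_) (tu_add h1 h2)
    · rw [← mul_add, ← Finset.sum_add_distrib]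
      simp [ContinuousMap.add_apply]
    · rw [← intervalIntegral.integral_add (hInt g₁) (hInt g₂)]
      simp [ContinuousMap.add_apply]
  have hsmulQ : ∀ (c : ℂ) g, Q g → Q (c • g) := by
    intro c g h
    refine tu_congr (fun N t => ?_) (fun t => ?_) (tu_smul c h)
    · rw [← mul_assoc, mul_comm c, mul_assoc, Finset.mul_sum]
      simp [ContinuousMap.smul_apply, smul_eq_mul]
    · rw [← intervalIntegral.integral_const_mul]
      simp [ContinuousMap.smul_apply, smul_eq_mul]
  have hzeroQ : Q 0 := by
    refine tu_congr (fun N t => ?_) (fun t => ?_) (tu_const (fun _ => (0:ℂ)))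
    · simp
    · simp
  set V : Submodule ℂ C(AddCircle (1:ℝ), ℂ) :=
    { carrier := {g | Q g}
      add_mem' := fun h1 h2 => hadd _ _ h1 h2
      zero_mem' := hzeroQ
      smul_mem' := fun c g h => hsmulQ c g h } with hV
  have hclosed : IsClosed (V : Set C(AddCircle (1:ℝ), ℂ)) := by
    refine isClosed_of_closure_subset ?_
    intro g hg
    show Q g
    simp only [hQ]
    rw [Metric.tendstoUniformly_iff]
    intro ε hε
    obtain ⟨g', hg'V, hgg'⟩ := Metric.mem_closure_iff.mp hg (ε/4) (by linarith)
    have hQg' : Q g' := hg'V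
    have h1 := (Metric.tendstoUniformly_iff.mp hQg') (ε/4) (by linarith)
    filter_upwards [h1] with N hN t
    have hbd : ∀ x : AddCircle (1:ℝ), ‖g x - g' x‖ ≤ dist g g' := by
      intro x
      rw [← dist_eq_norm]
      exact ContinuousMap.dist_apply_le_dist x
    have key1 : dist (∫ s in (0:ℝ)..1, g ((s:ℝ) : AddCircle (1:ℝ)))
        (∫ s in (0:ℝ)..1, g' ((s:ℝ) : AddCircle (1:ℝ))) ≤ dist g g' := by
      rw [dist_eq_norm, ← intervalIntegral.integral_sub (hInt g) (hInt g')]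
      have := intervalIntegral.norm_integral_le_of_norm_le_const
        (C := dist g g') (f := fun s : ℝ => g ((s:ℝ) : AddCircle (1:ℝ)) - g' ((s:ℝ) : AddCircle (1:ℝ)))
        (a := 0) (b := 1) (fun x _ => hbd _)
      simpa using this
    have key3 : ∀ t : ℝ, dist
        ((2*(N:ℂ)+1)⁻¹ * ∑ j ∈ Finset.Icc (-(N:ℤ)) (N:ℤ),
          g' ((t - (j:ℝ)*θ : ℝ) : AddCircle (1:ℝ)))
        ((2*(N:ℂ)+1)⁻¹ * ∑ j ∈ Finset.Icc (-(N:ℤ)) (N:ℤ),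
          g ((t - (j:ℝ)*θ : ℝ) : AddCircle (1:ℝ))) ≤ dist g g' := by
      intro t
      rw [dist_eq_norm, ← mul_sub, ← Finset.sum_sub_distrib, norm_mul, norm_twoN1_inv]
      have hsum : ‖∑ j ∈ Finset.Icc (-(N:ℤ)) (N:ℤ),
          (g' ((t - (j:ℝ)*θ : ℝ) : AddCircle (1:ℝ)) - g ((t - (j:ℝ)*θ : ℝ) : AddCircle (1:ℝ)))‖
          ≤ (2*(N:ℝ)+1) * dist g g' := by
        calc ‖∑ j ∈ Finset.Icc (-(N:ℤ)) (N:ℤ),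
            (g' ((t - (j:ℝ)*θ : ℝ) : AddCircle (1:ℝ)) - g ((t - (j:ℝ)*θ : ℝ) : AddCircle (1:ℝ)))‖
            ≤ ∑ j ∈ Finset.Icc (-(N:ℤ)) (N:ℤ), ‖g' ((t - (j:ℝ)*θ : ℝ) : AddCircle (1:ℝ)) -
              g ((t - (j:ℝ)*θ : ℝ) : AddCircle (1:ℝ))‖ := norm_sum_le _ _
          _ ≤ ∑ _j ∈ Finset.Icc (-(N:ℤ)) (N:ℤ), dist g g' := by
              apply Finset.sum_le_sum
              intro j _
              rw [norm_sub_rev]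
              exact hbd _
          _ = (2*(N:ℝ)+1) * dist g g' := by
              rw [Finset.sum_const, card_Icc_int, nsmul_eq_mul]
              push_cast; ring
      have hpos : (0:ℝ) < 2*(N:ℝ)+1 := by positivity
      calc (2*(N:ℝ)+1)⁻¹ * ‖∑ j ∈ Finset.Icc (-(N:ℤ)) (N:ℤ),
            (g' ((t - (j:ℝ)*θ : ℝ) : AddCircle (1:ℝ)) - g ((t - (j:ℝ)*θ : ℝ) : AddCircle (1:ℝ)))‖
          ≤ (2*(N:ℝ)+1)⁻¹ * ((2*(N:ℝ)+1) * dist g g') := by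
            apply mul_le_mul_of_nonneg_left hsum (by positivity)
        _ = dist g g' := by field_simp
    calc dist (∫ s in (0:ℝ)..1, g ((s:ℝ) : AddCircle (1:ℝ)))
          ((2*(N:ℂ)+1)⁻¹ * ∑ j ∈ Finset.Icc (-(N:ℤ)) (N:ℤ),
            g ((t - (j:ℝ)*θ : ℝ) : AddCircle (1:ℝ)))
        ≤ dist (∫ s in (0:ℝ)..1, g ((s:ℝ) : AddCircle (1:ℝ)))
            (∫ s in (0:ℝ)..1, g' ((s:ℝ) : AddCircle (1:ℝ)))
          + dist (∫ s in (0:ℝ)..1, g' ((s:ℝ) : AddCircle (1:ℝ)))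
            ((2*(N:ℂ)+1)⁻¹ * ∑ j ∈ Finset.Icc (-(N:ℤ)) (N:ℤ),
              g' ((t - (j:ℝ)*θ : ℝ) : AddCircle (1:ℝ)))
          + dist ((2*(N:ℂ)+1)⁻¹ * ∑ j ∈ Finset.Icc (-(N:ℤ)) (N:ℤ),
              g' ((t - (j:ℝ)*θ : ℝ) : AddCircle (1:ℝ)))
            ((2*(N:ℂ)+1)⁻¹ * ∑ j ∈ Finset.Icc (-(N:ℤ)) (N:ℤ),
              g ((t - (j:ℝ)*θ : ℝ) : AddCircle (1:ℝ))) := dist_triangle4 _ _ _ _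
      _ < ε := by
          have h3 := key3 t
          have h2 := hN t
          linarith
  -- fourier monomials belong to V
  have hfourier : ∀ m : ℤ, fourier (T := 1) m ∈ V := by
    intro m
    show Q (fourier m)
    simp only [hQ]
    have hcoe : ∀ x : ℝ, (fourier (T := 1) m) ((x:ℝ) : AddCircle (1:ℝ)) =
        Complex.exp (2 * π * I * m * x) := by
      intro x
      rw [fourier_coe_apply]
      congr 1
      push_cast
      ring
    by_cases hm : m = 0
    · subst hm
      refine tu_congr (fun N t => ?_) (fun t => ?_) (tu_const (fun _ => (1:ℂ)))
      · rw [show ∑ j ∈ Finset.Icc (-(N:ℤ)) (N:ℤ),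
            (fourier (T := 1) 0) ((t - (j:ℝ)*θ : ℝ) : AddCircle (1:ℝ))
            = ∑ _j ∈ Finset.Icc (-(N:ℤ)) (N:ℤ), (1:ℂ) from
          Finset.sum_congr rfl fun j _ => by rw [hcoe]; simp]
        exact (avg_one N).symm
      · rw [show (∫ s in (0:ℝ)..1, (fourier (T := 1) 0) ((s:ℝ) : AddCircle (1:ℝ)))
            = ∫ s in (0:ℝ)..1, (1:ℂ) from
          intervalIntegral.integral_congr fun s _ => by rw [hcoe]; simp]
        simp
    · -- nonzero frequency
      set z : ℂ := Complex.exp (((-(2*π*m*θ) : ℝ) : ℂ) * I) with hz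
      have hz1 : ‖z‖ = 1 := Complex.norm_exp_ofReal_mul_I _
      have hzne : z ≠ 1 := by
        intro hcon
        rw [hz, Complex.exp_eq_one_iff] at hcon
        obtain ⟨n, hn⟩ := hcon
        have hre : -(2*π*m*θ) = (n:ℝ) * (2*π) := by
          have := hn
          have h2 : ((-(2*π*m*θ) : ℝ) : ℂ) * I = (((n:ℝ) * (2*π) : ℝ) : ℂ) * I := by
            rw [this]; push_cast; ring
          have h3 := mul_right_cancel₀ Complex.I_ne_zero h2
          exact_mod_cast h3
        have h2π : (2*π : ℝ) ≠ 0 := by positivity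
        have hkey : (2*π) * ((m:ℝ)*θ) = (2*π) * (-(n:ℝ)) := by linear_combination -hre
        have hmθ : (m:ℝ) * θ = -(n:ℝ) := mul_left_cancel₀ h2π hkey
        exact (hθ.intCast_mul hm).ne_int (-n) (by push_cast; exact hmθ)
      have hfac : ∀ (N : ℕ) (t : ℝ), ((2*(N:ℂ)+1)⁻¹ * ∑ j ∈ Finset.Icc (-(N:ℤ)) (N:ℤ), z ^ j) *
          Complex.exp (2 * π * I * m * t) =
          (2*(N:ℂ)+1)⁻¹ * ∑ j ∈ Finset.Icc (-(N:ℤ)) (N:ℤ),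
            (fourier (T := 1) m) ((t - (j:ℝ)*θ : ℝ) : AddCircle (1:ℝ)) := by
        intro N t
        rw [mul_assoc, Finset.sum_mul]
        congr 1
        apply Finset.sum_congr rfl
        intro j _
        rw [hcoe]
        rw [hz, ← Complex.exp_int_mul, ← Complex.exp_add]
        congr 1
        push_cast
        ring
      have hbd : ∀ t : ℝ, ‖Complex.exp (2 * π * I * m * t)‖ ≤ 1 := by
        intro t
        have : (2 * (π:ℂ) * I * m * t) = (((2*π*m*t : ℝ) : ℂ)) * I := by push_cast; ring
        rw [this, Complex.norm_exp_ofReal_mul_I]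
      have hmain := tendstoUniformly_of_factor _ 0 (avg_tendsto_zero z hz1 hzne)
        (fun t => Complex.exp (2 * π * I * m * t)) 1 hbd
      refine tu_congr (fun N t => hfac N t) (fun t => ?_) hmain
      rw [zero_mul]
      have hintegral : (∫ s in (0:ℝ)..1, (fourier (T := 1) m) ((s:ℝ) : AddCircle (1:ℝ))) = 0 := by
        rw [show (∫ s in (0:ℝ)..1, (fourier (T := 1) m) ((s:ℝ) : AddCircle (1:ℝ)))
            = ∫ s in (0:ℝ)..1, Complex.exp ((2*π*I*m) * s) from
          intervalIntegral.integral_congr fun s _ => by rw [hcoe]]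
        have hcne : (2*(π:ℂ)*I*(m:ℂ)) ≠ 0 := by
          apply mul_ne_zero (mul_ne_zero (mul_ne_zero two_ne_zero ?_) Complex.I_ne_zero) ?_
          · exact_mod_cast Complex.ofReal_ne_zero.mpr Real.pi_ne_zero
          · exact_mod_cast hm
        rw [integral_exp_mul_complex hcne]
        have he1 : Complex.exp ((2*π*I*m) * 1) = 1 := by
          rw [show ((2*(π:ℂ)*I*m) * 1) = (m:ℂ) * (2*π*I) by push_cast; ring]
          exact Complex.exp_int_mul_two_pi_mul_I m
        have he0 : Complex.exp ((2*π*I*(m:ℂ)) * 0) = 1 := by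
          rw [mul_zero, Complex.exp_zero]
        rw [Complex.ofReal_one, Complex.ofReal_zero, he1, he0, sub_self, zero_div]
      rw [hintegral]
  -- conclude V = ⊤
  have hVtop : ∀ g : C(AddCircle (1:ℝ), ℂ), Q g := by
    intro g
    have hle : Submodule.span ℂ (Set.range (fourier (T := 1))) ≤ V :=
      Submodule.span_le.mpr (by rintro _ ⟨m, rfl⟩; exact hfourier m)
    have := Submodule.topologicalClosure_minimal _ hle hclosed
    rw [span_fourier_closure_eq_top] at this
    exact this (Submodule.mem_top) 
  -- lift f
  have hliftcont : Continuous (hper.lift) := continuous_coinduced_dom.mpr hcont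
  set F : C(AddCircle (1:ℝ), ℂ) := ⟨hper.lift, hliftcont⟩ with hF
  have hQF := hVtop F
  simp only [hQ] at hQF
  exact tu_congr (fun N t => rfl) (fun t => rfl) hQF


lemma pos_integral (r : ℝ → ℝ) (hc : Continuous r) (h0 : ∀ t, 0 ≤ r t)
    (hp : Function.Periodic r 1) (p : ℝ) (hpos : 0 < r p) :
    0 < ∫ s in (0:ℝ)..1, r s := by
  rw [intervalIntegral.integral_pos_iff_support_of_nonneg_ae
    (Filter.Eventually.of_forall h0) (hc.intervalIntegrable 0 1)]
  refine ⟨one_pos, ?_⟩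
  -- find a point q ∈ Ioc 0 1 with r q > 0
  obtain ⟨q, hq01, hrq⟩ : ∃ q, q ∈ Set.Ioc (0:ℝ) 1 ∧ 0 < r q := by
    set q0 := Int.fract p with hq0
    have hrq0 : r q0 = r p := by
      have := hp.sub_int_mul_eq (x := p) (n := ⌊p⌋)
      rw [mul_one] at this
      rw [hq0]
      exact this
    by_cases h : q0 = 0
    · refine ⟨1, ⟨one_pos, le_refl 1⟩, ?_⟩
      have h10 : r 1 = r p := by
        have h1 : r 1 = r 0 := by have := hp 0; rw [zero_add] at this; exact this
        rw [h1, show (0:ℝ) = q0 from h.symm, hrq0]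
      rw [h10]; exact hpos
    · refine ⟨q0, ⟨lt_of_le_of_ne (Int.fract_nonneg p) (Ne.symm h), (Int.fract_lt_one p).le⟩, ?_⟩
      rw [hrq0]; exact hpos
  -- an open interval inside the support
  have hopen : IsOpen {x : ℝ | 0 < r x} := isOpen_lt continuous_const hc
  obtain ⟨δ, hδ, hball⟩ := Metric.isOpen_iff.mp hopen q hrq
  set δ' := min δ q with hδ'
  have hδ'pos : 0 < δ' := lt_min hδ hq01.1
  have hsub : Set.Ioo (q - δ') q ⊆ Function.support r ∩ Set.Ioc 0 1 := by
    intro x hx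
    have hd1 : δ' ≤ δ := min_le_left _ _
    have hd2 : δ' ≤ q := min_le_right _ _
    have hxball : x ∈ Metric.ball q δ := by
      rw [Metric.mem_ball, Real.dist_eq, abs_lt]
      constructor
      · linarith [hx.1]
      · linarith [hx.2]
    refine ⟨Function.mem_support.mpr (ne_of_gt (hball hxball)), ?_, ?_⟩
    · linarith [hx.1]
    · linarith [hx.2, hq01.2]
  calc (0:ENNReal) < ENNReal.ofReal δ' := by
        rw [ENNReal.ofReal_pos]; exact hδ'pos
    _ = MeasureTheory.volume (Set.Ioo (q - δ') q) := by
        rw [Real.volume_Ioo]; congr 1; ring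
    _ ≤ MeasureTheory.volume (Function.support r ∩ Set.Ioc 0 1) :=
        measure_mono hsub

lemma exp_avg_tendsto_zero (θ : ℝ) (hθ : Irrational θ) (k : ℤ) (hk : k ≠ 0) :
    Tendsto (fun N : ℕ => (2*(N:ℂ)+1)⁻¹ *
      ∑ j ∈ Finset.Icc (-(N:ℤ)) (N:ℤ),
        Complex.exp (2*(π:ℂ)*I*(j:ℂ)*(k:ℂ)*(θ:ℂ))) atTop (nhds 0) := by
  set z := Complex.exp (((2*π*k*θ : ℝ):ℂ) * I) with hz
  have hz1 : ‖z‖ = 1 := Complex.norm_exp_ofReal_mul_I _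
  have hzne : z ≠ 1 := by
    intro hcon
    rw [hz, Complex.exp_eq_one_iff] at hcon
    obtain ⟨n, hn⟩ := hcon
    have hre : (2*π*k*θ : ℝ) = (n:ℝ) * (2*π) := by
      have h2 : ((2*π*k*θ : ℝ) : ℂ) * I = (((n:ℝ) * (2*π) : ℝ) : ℂ) * I := by
        rw [hn]; push_cast; ring
      have h3 := mul_right_cancel₀ Complex.I_ne_zero h2
      exact_mod_cast h3
    have h2π : (2*π : ℝ) ≠ 0 := by positivity
    have hkey : (2*π) * ((k:ℝ)*θ) = (2*π) * ((n:ℝ)) := by linear_combination hre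
    have hkθ : (k:ℝ) * θ = (n:ℝ) := mul_left_cancel₀ h2π hkey
    exact (hθ.intCast_mul hk).ne_int n (by push_cast; exact hkθ)
  have hterm : ∀ j : ℤ, Complex.exp (2*(π:ℂ)*I*(j:ℂ)*(k:ℂ)*(θ:ℂ)) = z ^ j := by
    intro j
    rw [hz, ← Complex.exp_int_mul]
    congr 1
    push_cast
    ring
  have heq : (fun N : ℕ => (2*(N:ℂ)+1)⁻¹ *
      ∑ j ∈ Finset.Icc (-(N:ℤ)) (N:ℤ), Complex.exp (2*(π:ℂ)*I*(j:ℂ)*(k:ℂ)*(θ:ℂ)))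
      = (fun N : ℕ => (2*(N:ℂ)+1)⁻¹ * ∑ j ∈ Finset.Icc (-(N:ℤ)) (N:ℤ), z ^ j) := by
    funext N
    rw [Finset.sum_congr rfl fun j _ => hterm j]
  rw [heq]
  exact avg_tendsto_zero z hz1 hzne

lemma exp_avg_one (θ : ℝ) (N : ℕ) :
    (2*(N:ℂ)+1)⁻¹ * ∑ j ∈ Finset.Icc (-(N:ℤ)) (N:ℤ),
      Complex.exp (2*(π:ℂ)*I*(j:ℂ)*(((0:ℤ)):ℂ)*(θ:ℂ)) = 1 := by
  have h : ∀ j : ℤ, Complex.exp (2*(π:ℂ)*I*(j:ℂ)*(((0:ℤ)):ℂ)*(θ:ℂ)) = 1 := by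
    intro j; norm_num
  rw [Finset.sum_congr rfl fun j _ => h j]
  exact avg_one N

lemma sp_eq {v w : ↥SmoothPeriodic} (h : ∀ t, (↑v : ℝ → ℂ) t = (↑w : ℝ → ℂ) t) : v = w :=
  Subtype.ext (funext h)

lemma sp_zero {v : ↥SmoothPeriodic} (h : ∀ t, (↑v : ℝ → ℂ) t = 0) : v = 0 :=
  Subtype.ext (funext h)

lemma onePer_coe (t : ℝ) : (↑onePer : ℝ → ℂ) t = 1 := rfl

lemma expPer_coe (j : ℤ) (t : ℝ) :
    (↑(expPer j) : ℝ → ℂ) t = Complex.exp (2 * (π:ℂ) * I * (j : ℂ) * (t : ℂ)) := rfl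

section withmul

variable {θ : ℝ} {mul : NCTorus →ₗ[ℂ] NCTorus →ₗ[ℂ] NCTorus}
variable (hmul : ∀ (a b : NCTorus) (n : ℤ) (t : ℝ),
      (↑((mul a b) n) : ℝ → ℂ) t =
        ∑ k ∈ a.support, (↑(a k) : ℝ → ℂ) t * (↑(b (n - k)) : ℝ → ℂ) (t - (k : ℝ) * θ))

include hmul

lemma mul_single_left (g : ↥SmoothPeriodic) (m : ℤ) (a : NCTorus) (n : ℤ) (t : ℝ) :
    (↑((mul (Finsupp.single m g) a) n) : ℝ → ℂ) t =
      (↑g : ℝ → ℂ) t * (↑(a (n - m)) : ℝ → ℂ) (t - (m:ℝ)*θ) := by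
  rw [hmul]
  by_cases hg : g = 0
  · subst hg
    rw [Finsupp.single_zero]
    simp
  · rw [Finsupp.support_single_ne_zero m hg, Finset.sum_singleton, Finsupp.single_eq_same]

lemma mul_single_right (a : NCTorus) (m : ℤ) (g : ↥SmoothPeriodic) (n : ℤ) (t : ℝ) :
    (↑((mul a (Finsupp.single m g)) n) : ℝ → ℂ) t =
      (↑(a (n-m)) : ℝ → ℂ) t * (↑g : ℝ → ℂ) (t - ((n-m : ℤ):ℝ)*θ) := by
  rw [hmul]
  by_cases h : n - m ∈ a.support
  · rw [Finset.sum_eq_single_of_mem (n-m) h ?_]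
    · rw [show n - (n - m) = m by ring, Finsupp.single_eq_same]
    · intro k _ hkne
      have hne : m ≠ n - k := by omega
      rw [Finsupp.single_eq_of_ne' hne]
      simp
  · rw [Finset.sum_eq_zero ?_]
    · rw [Finsupp.notMem_support_iff.mp h]
      simp
    · intro k hk
      have hne : m ≠ n - k := by
        intro hc
        apply h
        have : k = n - m := by omega
        rwa [← this]
      rw [Finsupp.single_eq_of_ne' hne]
      simp

lemma uconj (a : NCTorus) (j n : ℤ) (t : ℝ) :
    (↑((mul (mul (Finsupp.single j onePer) a) (Finsupp.single (-j) onePer)) n) : ℝ → ℂ) t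
      = (↑(a n) : ℝ → ℂ) (t - (j:ℝ)*θ) := by
  rw [mul_single_right hmul, mul_single_left hmul, onePer_coe, one_mul, onePer_coe, mul_one]
  rw [show n - -j - j = n by ring]

lemma vconj (a : NCTorus) (j n : ℤ) (t : ℝ) :
    (↑((mul (Finsupp.single 0 (expPer j)) (mul a (Finsupp.single 0 (expPer (-j))))) n) : ℝ → ℂ) t
      = Complex.exp (2*(π:ℂ)*I*(j:ℂ)*(n:ℂ)*(θ:ℂ)) * (↑(a n) : ℝ → ℂ) t := by
  rw [mul_single_left hmul, mul_single_right hmul, expPer_coe, expPer_coe]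
  rw [show ((0:ℤ):ℝ) * θ = 0 by norm_num, sub_zero, sub_zero, sub_zero]
  rw [show Complex.exp (2*(π:ℂ)*I*(j:ℂ)*(t:ℂ)) *
      ((↑(a n) : ℝ → ℂ) t * Complex.exp (2*(π:ℂ)*I*((-j:ℤ):ℂ)*((t - (n:ℝ)*θ : ℝ):ℂ)))
      = (Complex.exp (2*(π:ℂ)*I*(j:ℂ)*(t:ℂ)) *
          Complex.exp (2*(π:ℂ)*I*((-j:ℤ):ℂ)*((t - (n:ℝ)*θ : ℝ):ℂ))) * (↑(a n) : ℝ → ℂ) t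
    by ring]
  congr 2
  rw [← Complex.exp_add]
  congr 1
  push_cast
  ring

omit hmul in
lemma comp_apply (c : ℂ) (F : ℤ → NCTorus) (s : Finset ℤ) (k : ℤ) (t : ℝ) :
    (↑(((c • ∑ j ∈ s, F j) : NCTorus) k) : ℝ → ℂ) t = c * ∑ j ∈ s, (↑((F j) k) : ℝ → ℂ) t := by
  rw [Finsupp.smul_apply, Finsupp.finset_sum_apply]
  rw [SetLike.val_smul]
  rw [Pi.smul_apply, smul_eq_mul]
  congr 1
  rw [AddSubmonoidClass.coe_finset_sum]
  rw [Finset.sum_apply]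

end withmul

lemma sp_contDiff (v : ↥SmoothPeriodic) : ContDiff ℝ (⊤ : ℕ∞) (↑v : ℝ → ℂ) := v.2.1

lemma sp_periodic (v : ↥SmoothPeriodic) : Function.Periodic (↑v : ℝ → ℂ) 1 := v.2.2

section conjs

variable {θ : ℝ} {mul : NCTorus →ₗ[ℂ] NCTorus →ₗ[ℂ] NCTorus}
variable (hmul : ∀ (a b : NCTorus) (n : ℤ) (t : ℝ),
      (↑((mul a b) n) : ℝ → ℂ) t =
        ∑ k ∈ a.support, (↑(a k) : ℝ → ℂ) t * (↑(b (n - k)) : ℝ → ℂ) (t - (k : ℝ) * θ))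

include hmul

lemma conj1 (hθ : Irrational θ) (a : NCTorus) (k : ℤ) :
    TendstoUniformly
      (fun N : ℕ => fun t : ℝ =>
        (↑(((((2 * (N : ℂ) + 1)⁻¹) •
          ∑ j ∈ Finset.Icc (-(N : ℤ)) (N : ℤ),
            mul (mul (Finsupp.single j onePer) a) (Finsupp.single (-j) onePer)) : NCTorus) k)
          : ℝ → ℂ) t)
      (fun _ : ℝ => ∫ s in (0 : ℝ)..1, (↑(a k) : ℝ → ℂ) s) atTop := by
  have hb := birkhoff_unif θ hθ (↑(a k)) (sp_contDiff (a k)).continuous (sp_periodic (a k))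
  refine tu_congr (fun N t => ?_) (fun t => rfl) hb
  rw [comp_apply]
  congr 1
  exact Finset.sum_congr rfl fun j _ => (uconj hmul a j k t).symm

lemma conj2 (hθ : Irrational θ) (a : NCTorus) (k : ℤ) :
    TendstoUniformly
      (fun N : ℕ => fun t : ℝ =>
        (↑(((((2 * (N : ℂ) + 1)⁻¹) •
          ∑ j ∈ Finset.Icc (-(N : ℤ)) (N : ℤ),
            mul (Finsupp.single 0 (expPer j)) (mul a (Finsupp.single 0 (expPer (-j)))))
            : NCTorus) k) : ℝ → ℂ) t)
      (fun t : ℝ => if k = 0 then (↑(a 0) : ℝ → ℂ) t else 0) atTop := by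
  by_cases hk : k = 0
  · subst hk
    refine tu_congr (fun N t => ?_) (fun t => (if_pos rfl).symm)
      (tu_const (↑(a 0) : ℝ → ℂ))
    rw [comp_apply, Finset.sum_congr rfl (fun j _ => vconj hmul a j 0 t),
      ← Finset.sum_mul, ← mul_assoc, exp_avg_one θ N, one_mul]
  · obtain ⟨C, hC⟩ := per_bound (↑(a k)) (sp_contDiff (a k)).continuous (sp_periodic (a k))
    have hmain := tendstoUniformly_of_factor _ 0 (exp_avg_tendsto_zero θ hθ k hk)
      (↑(a k) : ℝ → ℂ) C hC
    refine tu_congr (fun N t => ?_) (fun t => by rw [if_neg hk, zero_mul]) hmain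
    rw [comp_apply, Finset.sum_congr rfl (fun j _ => vconj hmul a j k t),
      ← Finset.sum_mul, ← mul_assoc]

lemma conj3 (hθ : Irrational θ) (a : NCTorus) (k : ℤ) :
    TendstoUniformly
      (fun N : ℕ => fun t : ℝ =>
        (↑(((((2 * (N : ℂ) + 1)⁻¹) •
          ∑ j ∈ Finset.Icc (-(N : ℤ)) (N : ℤ),
            mul (mul (Finsupp.single j onePer) (Finsupp.single 0 (a 0)))
              (Finsupp.single (-j) onePer)) : NCTorus) k) : ℝ → ℂ) t)
      (fun _ : ℝ => if k = 0 then ∫ s in (0 : ℝ)..1, (↑(a 0) : ℝ → ℂ) s else 0) atTop := by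
  have h := conj1 hmul hθ (Finsupp.single 0 (a 0)) k
  refine tu_congr (fun N t => rfl) (fun t => ?_) h
  by_cases hk : k = 0
  · subst hk
    rw [if_pos rfl, Finsupp.single_eq_same]
  · rw [if_neg hk, Finsupp.single_eq_of_ne' (fun h0 => hk h0.symm)]
    simp

lemma simple (hθ : Irrational θ) (I : Submodule ℂ NCTorus)
    (hI : ∀ x ∈ I, ∀ y : NCTorus, mul x y ∈ I ∧ mul y x ∈ I)
    (hM : MackeyClosedNCT I) (hne : I ≠ ⊥) :
    (∃ c ∈ I, ∃ c' : NCTorus,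
      mul c c' = Finsupp.single 0 onePer ∧ mul c' c = Finsupp.single 0 onePer) ∧ I = ⊤ := by
  classical
  obtain ⟨a, haI, hane⟩ := (Submodule.ne_bot_iff I).mp hne
  -- the adjoint element
  have hconjCD : ContDiff ℝ (⊤ : ℕ∞) (⇑(starRingEnd ℂ) : ℂ → ℂ) := by
    have he : (⇑(starRingEnd ℂ) : ℂ → ℂ) = ⇑Complex.conjCLE := by
      funext z; rw [Complex.conjCLE_apply]
    rw [he]
    exact Complex.conjCLE.contDiff
  have hstarmem : ∀ (v : ↥SmoothPeriodic) (c : ℝ),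
      (fun t => (starRingEnd ℂ) ((↑v : ℝ → ℂ) (t + c))) ∈ SmoothPeriodic := by
    intro v c
    constructor
    · have h1 : ContDiff ℝ (⊤ : ℕ∞) (fun t : ℝ => (↑v : ℝ → ℂ) (t + c)) :=
        (sp_contDiff v).comp (contDiff_id.add contDiff_const)
      exact hconjCD.comp h1
    · intro t
      simp only
      rw [show t + 1 + c = (t + c) + 1 by ring, sp_periodic v (t+c)]
  set astar : NCTorus := ∑ k ∈ a.support, Finsupp.single (-k)
      (⟨fun t => (starRingEnd ℂ) ((↑(a k) : ℝ → ℂ) (t + (k:ℝ)*θ)),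
        hstarmem (a k) ((k:ℝ)*θ)⟩ : ↥SmoothPeriodic) with hastar
  have hastar_apply : ∀ (n : ℤ) (t : ℝ), (↑(astar n) : ℝ → ℂ) t
      = (starRingEnd ℂ) ((↑(a (-n)) : ℝ → ℂ) (t - (n:ℝ)*θ)) := by
    intro n t
    rw [hastar, Finsupp.finset_sum_apply, AddSubmonoidClass.coe_finset_sum, Finset.sum_apply]
    have hterm : ∀ k ∈ a.support,
        (↑((Finsupp.single (-k)
          (⟨fun t => (starRingEnd ℂ) ((↑(a k) : ℝ → ℂ) (t + (k:ℝ)*θ)),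
            hstarmem (a k) ((k:ℝ)*θ)⟩ : ↥SmoothPeriodic)) n) : ℝ → ℂ) t
        = if k = -n then (starRingEnd ℂ) ((↑(a k) : ℝ → ℂ) (t + (k:ℝ)*θ)) else 0 := by
      intro k _
      rw [Finsupp.single_apply]
      by_cases h : -k = n
      · rw [if_pos h, if_pos (by omega)]
      · rw [if_neg h, if_neg (by omega)]
        simp
    rw [Finset.sum_congr rfl hterm, Finset.sum_ite_eq' a.support (-n)]
    by_cases h : -n ∈ a.support
    · rw [if_pos h]
      congr 2
      push_cast
      ring_nf
    · rw [if_neg h, Finsupp.notMem_support_iff.mp h]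
      simp
  set b : NCTorus := mul astar a with hb
  have hbI : b ∈ I := (hI a haI astar).2
  set r : ℝ → ℝ := fun t =>
    ∑ k ∈ astar.support, Complex.normSq ((↑(a (-k)) : ℝ → ℂ) (t - (k:ℝ)*θ)) with hr
  have hb0 : ∀ t, (↑(b 0) : ℝ → ℂ) t = ((r t : ℝ) : ℂ) := by
    intro t
    rw [hb, hmul, hr]
    push_cast
    refine Finset.sum_congr rfl fun k _ => ?_
    rw [zero_sub, hastar_apply, mul_comm, Complex.mul_conj]
  have hrcont : Continuous r := by
    rw [hr]
    apply continuous_finset_sum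
    intro k _
    exact Complex.continuous_normSq.comp
      ((sp_contDiff (a (-k))).continuous.comp (continuous_id.sub continuous_const))
  have hrper : Function.Periodic r 1 := by
    intro t
    rw [hr]
    simp only
    refine Finset.sum_congr rfl fun k _ => ?_
    rw [show t + 1 - (k:ℝ)*θ = (t - (k:ℝ)*θ) + 1 by ring, sp_periodic (a (-k))]
  have hrnn : ∀ t, 0 ≤ r t := fun t =>
    Finset.sum_nonneg fun k _ => Complex.normSq_nonneg _
  obtain ⟨m0, hm0⟩ : ∃ m, a m ≠ 0 := by
    by_contra h
    push_neg at h
    exact hane (Finsupp.ext h)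
  obtain ⟨t0, ht0⟩ : ∃ t0, (↑(a m0) : ℝ → ℂ) t0 ≠ 0 := by
    by_contra h
    push_neg at h
    exact hm0 (sp_zero h)
  have hargeq : (t0 - (m0:ℝ)*θ) - ((-m0 : ℤ):ℝ)*θ = t0 := by push_cast; ring
  have hmem : -m0 ∈ astar.support := by
    rw [Finsupp.mem_support_iff]
    intro hz
    apply ht0
    have h1 := hastar_apply (-m0) (t0 - (m0:ℝ)*θ)
    rw [hz] at h1
    rw [neg_neg] at h1
    have h2 : ((t0 - (m0:ℝ)*θ) - ((-m0 : ℤ):ℝ)*θ) = t0 := hargeq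
    rw [h2] at h1
    have h3 : (starRingEnd ℂ) ((↑(a m0) : ℝ → ℂ) t0) = 0 := by
      rw [← h1]; simp
    simpa using h3
  have hrpos : 0 < r (t0 - (m0:ℝ)*θ) := by
    have hterm : 0 < Complex.normSq ((↑(a (-(-m0))) : ℝ → ℂ)
        ((t0 - (m0:ℝ)*θ) - ((-m0 : ℤ):ℝ)*θ)) := by
      rw [neg_neg, hargeq]
      exact Complex.normSq_pos.mpr ht0
    refine lt_of_lt_of_le hterm ?_
    have := Finset.single_le_sum
      (f := fun k => Complex.normSq ((↑(a (-k)) : ℝ → ℂ) ((t0 - (m0:ℝ)*θ) - (k:ℝ)*θ)))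
      (fun k _ => Complex.normSq_nonneg _) hmem
    exact this
  set ν : ℂ := ∫ s in (0:ℝ)..1, (↑(b 0) : ℝ → ℂ) s with hν
  have hνr : ν = ((∫ s in (0:ℝ)..1, r s : ℝ) : ℂ) := by
    rw [hν, intervalIntegral.integral_congr (g := fun s => ((r s : ℝ) : ℂ))
      (fun s _ => hb0 s)]
    exact intervalIntegral.integral_ofReal
  have hνpos : 0 < ∫ s in (0:ℝ)..1, r s := pos_integral r hrcont hrnn hrper _ hrpos
  have hν0 : ν ≠ 0 := by
    rw [hνr]
    exact_mod_cast ne_of_gt hνpos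
  -- averaging over v-conjugates
  set x2 : ℕ → NCTorus := fun N => (2*(N:ℂ)+1)⁻¹ •
    ∑ j ∈ Finset.Icc (-(N:ℤ)) (N:ℤ),
      mul (Finsupp.single 0 (expPer j)) (mul b (Finsupp.single 0 (expPer (-j)))) with hx2
  set y2 : NCTorus := Finsupp.single 0 (b 0) with hy2
  set dd : ℕ → ℤ → ℂ := fun N k => (2*(N:ℂ)+1)⁻¹ *
    ∑ j ∈ Finset.Icc (-(N:ℤ)) (N:ℤ), Complex.exp (2*(π:ℂ)*Complex.I*(j:ℂ)*(k:ℂ)*(θ:ℂ)) with hdd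
  have hx2c : ∀ N k, x2 N k = dd N k • b k := by
    intro N k
    apply sp_eq
    intro t
    simp only [hx2]
    rw [comp_apply, Finset.sum_congr rfl (fun j _ => vconj hmul b j k t),
      ← Finset.sum_mul, ← mul_assoc]
    rw [SetLike.val_smul, Pi.smul_apply, smul_eq_mul, hdd]
  have hx2I : ∀ N, x2 N ∈ I := by
    intro N
    apply I.smul_mem
    apply Submodule.sum_mem
    intro j _
    exact (hI _ ((hI b hbI (Finsupp.single 0 (expPer (-j)))).1)
      (Finsupp.single 0 (expPer j))).2
  have hx2supp : ∀ N, (x2 N).support ⊆ b.support := by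
    intro N
    apply Finsupp.support_subset_iff.mpr
    intro k hk
    rw [hx2c N k, Finsupp.notMem_support_iff.mp hk, smul_zero]
  have hy2I : y2 ∈ I := by
    apply hM x2 y2 hx2I ⟨b.support, hx2supp⟩
    intro k m
    have hcd : ContDiff ℝ (⊤ : ℕ∞) (↑(b k) : ℝ → ℂ) := sp_contDiff _
    have hiter : ∀ N t, iteratedDeriv m (↑(x2 N k) : ℝ → ℂ) t
        = dd N k * iteratedDeriv m (↑(b k) : ℝ → ℂ) t := by
      intro N t
      rw [hx2c N k, SetLike.val_smul, iter_smul _ _ hcd m]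
      rw [Pi.smul_apply, smul_eq_mul]
    by_cases hk : k = 0
    · subst hk
      refine tu_congr (fun N t => ?_) (fun t => ?_)
        (tu_const (iteratedDeriv m (↑(b 0) : ℝ → ℂ)))
      · rw [hiter N t, show dd N 0 = 1 from exp_avg_one θ N, one_mul]
      · rw [hy2, Finsupp.single_eq_same]
    · obtain ⟨C, hC⟩ := per_bound (iteratedDeriv m (↑(b k) : ℝ → ℂ))
        (hcd.continuous_iteratedDeriv m (by exact_mod_cast le_top))
        (periodic_iteratedDeriv _ (sp_periodic _) m)
      have hmain := tendstoUniformly_of_factor (fun N => dd N k) 0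
        (exp_avg_tendsto_zero θ hθ k hk) _ C hC
      refine tu_congr (fun N t => ?_) (fun t => ?_) hmain
      · rw [hiter N t]
      · rw [zero_mul, hy2, Finsupp.single_eq_of_ne' (fun h0 => hk h0.symm),
          ZeroMemClass.coe_zero,
          show ((0 : ℝ → ℂ)) = (fun _ : ℝ => (0:ℂ)) from rfl, iteratedDeriv_zero_fun]
  -- averaging over u-conjugates
  have htransmem : ∀ (v : ↥SmoothPeriodic) (c : ℝ),
      (fun t => (↑v : ℝ → ℂ) (t - c)) ∈ SmoothPeriodic := by
    intro v c
    constructor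
    · exact (sp_contDiff v).comp (contDiff_id.sub contDiff_const)
    · intro t
      simp only
      rw [show t + 1 - c = (t - c) + 1 by ring, sp_periodic v (t - c)]
  set τ : ℤ → ↥SmoothPeriodic := fun j =>
    (⟨fun t => (↑(b 0) : ℝ → ℂ) (t - (j:ℝ)*θ), htransmem (b 0) ((j:ℝ)*θ)⟩ : ↥SmoothPeriodic)
    with hτ
  set x1 : ℕ → NCTorus := fun N => (2*(N:ℂ)+1)⁻¹ •
    ∑ j ∈ Finset.Icc (-(N:ℤ)) (N:ℤ),
      mul (mul (Finsupp.single j onePer) y2) (Finsupp.single (-j) onePer) with hx1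
  have hx1I : ∀ N, x1 N ∈ I := by
    intro N
    apply I.smul_mem
    apply Submodule.sum_mem
    intro j _
    exact (hI _ ((hI y2 hy2I (Finsupp.single j onePer)).2) (Finsupp.single (-j) onePer)).1
  have hx1c0 : ∀ N, x1 N 0 = (2*(N:ℂ)+1)⁻¹ • ∑ j ∈ Finset.Icc (-(N:ℤ)) (N:ℤ), τ j := by
    intro N
    apply sp_eq
    intro t
    simp only [hx1]
    rw [comp_apply, Finset.sum_congr rfl (fun j _ => uconj hmul y2 j 0 t)]
    rw [SetLike.val_smul, Pi.smul_apply, smul_eq_mul, AddSubmonoidClass.coe_finset_sum,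
      Finset.sum_apply]
    congr 1
    refine Finset.sum_congr rfl fun j _ => ?_
    rw [hy2, Finsupp.single_eq_same, hτ]
  have hx1ck : ∀ N k, k ≠ 0 → x1 N k = 0 := by
    intro N k hk
    apply sp_zero
    intro t
    simp only [hx1]
    rw [comp_apply, Finset.sum_congr rfl (fun j _ => uconj hmul y2 j k t)]
    rw [hy2, Finsupp.single_eq_of_ne' (fun h0 => hk h0.symm)]
    simp
  set y1 : NCTorus := Finsupp.single 0 (ν • onePer) with hy1
  have hy1I : y1 ∈ I := by
    apply hM x1 y1 hx1I ⟨{0}, ?_⟩ ?_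
    · intro N
      apply Finsupp.support_subset_iff.mpr
      intro k hk
      exact hx1ck N k (fun h0 => hk (by rw [h0]; exact Finset.mem_singleton_self 0))
    · intro k m
      by_cases hk : k = 0
      · subst hk
        have hsum_cd : ContDiff ℝ (⊤ : ℕ∞) (↑(∑ j ∈ Finset.Icc (-(0:ℤ)) (0:ℤ), τ j) : ℝ → ℂ) :=
          sp_contDiff _
        have hG : ∀ (N : ℕ) (t : ℝ), iteratedDeriv m (↑(x1 N 0) : ℝ → ℂ) t
            = (2*(N:ℂ)+1)⁻¹ * ∑ j ∈ Finset.Icc (-(N:ℤ)) (N:ℤ),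
                iteratedDeriv m (↑(b 0) : ℝ → ℂ) (t - (j:ℝ)*θ) := by
          intro N t
          rw [hx1c0 N, SetLike.val_smul,
            iter_smul _ _ (sp_contDiff (∑ j ∈ Finset.Icc (-(N:ℤ)) (N:ℤ), τ j)) m]
          rw [Pi.smul_apply, smul_eq_mul]
          congr 1
          have hcoe : (↑(∑ j ∈ Finset.Icc (-(N:ℤ)) (N:ℤ), τ j) : ℝ → ℂ)
              = fun t => ∑ j ∈ Finset.Icc (-(N:ℤ)) (N:ℤ), (↑(τ j) : ℝ → ℂ) t := by
            rw [AddSubmonoidClass.coe_finset_sum]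
            funext t'
            rw [Finset.sum_apply]
          rw [hcoe, iter_sum _ _ (fun j => sp_contDiff (τ j)) m]
          refine Finset.sum_congr rfl fun j _ => ?_
          rw [hτ]
          rw [show ((⟨fun t => (↑(b 0) : ℝ → ℂ) (t - (j:ℝ)*θ),
            htransmem (b 0) ((j:ℝ)*θ)⟩ : ↥SmoothPeriodic) : ℝ → ℂ)
            = fun t => (↑(b 0) : ℝ → ℂ) (t - (j:ℝ)*θ) from rfl, iter_translate]
        have hbirk := birkhoff_unif θ hθ (iteratedDeriv m (↑(b 0) : ℝ → ℂ))
          ((sp_contDiff (b 0)).continuous_iteratedDeriv m (by exact_mod_cast le_top))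
          (periodic_iteratedDeriv _ (sp_periodic _) m)
        refine tu_congr (fun N t => (hG N t).symm) (fun t => ?_) hbirk
        rw [hy1, Finsupp.single_eq_same]
        have hcoeν : (↑(ν • onePer) : ℝ → ℂ) = fun _ : ℝ => ν * 1 := by
          rw [SetLike.val_smul]
          rfl
        rw [hcoeν]
        match m with
        | 0 =>
          rw [iteratedDeriv_zero]
          rw [mul_one]
          exact hν.symm
        | (m'+1) =>
          rw [iteratedDeriv_const_fun (m'+1) (ν*1) (Nat.succ_ne_zero m')]
          have hdiff : ∀ x ∈ Set.uIcc (0:ℝ) 1,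
              DifferentiableAt ℝ (iteratedDeriv m' (↑(b 0) : ℝ → ℂ)) x := by
            intro x _
            exact ((sp_contDiff (b 0)).differentiable_iteratedDeriv m'
              (by exact_mod_cast WithTop.coe_lt_top _)).differentiableAt
          have hcont : IntervalIntegrable (deriv (iteratedDeriv m' (↑(b 0) : ℝ → ℂ)))
              MeasureTheory.volume 0 1 := by
            have hc : Continuous (deriv (iteratedDeriv m' (↑(b 0) : ℝ → ℂ))) := by
              rw [← iteratedDeriv_succ]
              exact (sp_contDiff (b 0)).continuous_iteratedDeriv (m'+1) (by exact_mod_cast le_top)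
            exact hc.intervalIntegrable 0 1
          have : (∫ s in (0:ℝ)..1, iteratedDeriv (m'+1) (↑(b 0) : ℝ → ℂ) s) =
              (∫ s in (0:ℝ)..1, deriv (iteratedDeriv m' (↑(b 0) : ℝ → ℂ)) s) := by
            refine intervalIntegral.integral_congr fun s _ => ?_
            rw [iteratedDeriv_succ]
          rw [this, intervalIntegral.integral_deriv_eq_sub hdiff hcont]
          have hper' := periodic_iteratedDeriv (↑(b 0) : ℝ → ℂ) (sp_periodic _) m' 0
          rw [zero_add] at hper'
          rw [hper', sub_self]
      · refine tu_congr (fun N t => ?_) (fun t => ?_) (tu_const (fun _ : ℝ => (0:ℂ)))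
        · rw [hx1ck N k hk, ZeroMemClass.coe_zero,
            show ((0 : ℝ → ℂ)) = (fun _ : ℝ => (0:ℂ)) from rfl, iteratedDeriv_zero_fun]
        · rw [hy1, Finsupp.single_eq_of_ne' (fun h0 => hk h0.symm), ZeroMemClass.coe_zero,
            show ((0 : ℝ → ℂ)) = (fun _ : ℝ => (0:ℂ)) from rfl, iteratedDeriv_zero_fun]
  -- the unit belongs to I
  have hunit : ∀ x : NCTorus, mul (Finsupp.single 0 onePer) x = x := by
    intro x
    apply Finsupp.ext
    intro n
    apply sp_eq
    intro t
    rw [mul_single_left hmul, onePer_coe, one_mul, sub_zero,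
      show ((0:ℤ):ℝ)*θ = 0 by norm_num, sub_zero]
  have hcI : Finsupp.single 0 onePer ∈ I := by
    have h := I.smul_mem ν⁻¹ hy1I
    have he : ν⁻¹ • y1 = Finsupp.single 0 onePer := by
      rw [hy1, Finsupp.smul_single, smul_smul, inv_mul_cancel₀ hν0, one_smul]
    rwa [he] at h
  refine ⟨⟨Finsupp.single 0 onePer, hcI, Finsupp.single 0 onePer, hunit _, hunit _⟩, ?_⟩
  rw [Submodule.eq_top_iff']
  intro x
  have h := (hI _ hcI x).1
  rwa [hunit x] at h

end conjs

end NCT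

/-- Simplicity of the smooth (bornological) noncommutative torus for irrational
angle `θ`. Here `mul` is the crossed product multiplication of
`C^∞(S¹) ⋊_θ ℤ`, characterized by the convolution formula `hmul`. The Cesàro
averages over conjugation by the unitaries `u^j = δ_j ⊗ 1` converge (uniformly
in each component) to `δ_k ⊗ ∫ a_k`; the averages over conjugation by
`v^j = δ_0 ⊗ e^{2πijt}` converge to `δ_0 ⊗ a_0`; the composite sends `a` to
`δ_0 ⊗ ∫ a_0`. Consequently every nonzero closed two-sided ideal contains an
invertible element, hence equals the whole algebra: `𝒜_θ` is simple. -/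
theorem stmt_19 (θ : ℝ) (hθ : Irrational θ)
    (mul : NCTorus →ₗ[ℂ] NCTorus →ₗ[ℂ] NCTorus)
    (hmul : ∀ (a b : NCTorus) (n : ℤ) (t : ℝ),
      (↑((mul a b) n) : ℝ → ℂ) t =
        ∑ k ∈ a.support, (↑(a k) : ℝ → ℂ) t * (↑(b (n - k)) : ℝ → ℂ) (t - (k : ℝ) * θ)) :
    (∀ (a : NCTorus) (k : ℤ),
      TendstoUniformly
        (fun N : ℕ => fun t : ℝ =>
          (↑(((((2 * (N : ℂ) + 1)⁻¹) •
            ∑ j ∈ Finset.Icc (-(N : ℤ)) (N : ℤ),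
              mul (mul (Finsupp.single j onePer) a) (Finsupp.single (-j) onePer)) : NCTorus) k)
            : ℝ → ℂ) t)
        (fun _ : ℝ => ∫ s in (0 : ℝ)..1, (↑(a k) : ℝ → ℂ) s) atTop) ∧
    (∀ (a : NCTorus) (k : ℤ),
      TendstoUniformly
        (fun N : ℕ => fun t : ℝ =>
          (↑(((((2 * (N : ℂ) + 1)⁻¹) •
            ∑ j ∈ Finset.Icc (-(N : ℤ)) (N : ℤ),
              mul (Finsupp.single 0 (expPer j)) (mul a (Finsupp.single 0 (expPer (-j)))))
              : NCTorus) k) : ℝ → ℂ) t)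
        (fun t : ℝ => if k = 0 then (↑(a 0) : ℝ → ℂ) t else 0) atTop) ∧
    (∀ (a : NCTorus) (k : ℤ),
      TendstoUniformly
        (fun N : ℕ => fun t : ℝ =>
          (↑(((((2 * (N : ℂ) + 1)⁻¹) •
            ∑ j ∈ Finset.Icc (-(N : ℤ)) (N : ℤ),
              mul (mul (Finsupp.single j onePer) (Finsupp.single 0 (a 0)))
                (Finsupp.single (-j) onePer)) : NCTorus) k) : ℝ → ℂ) t)
        (fun _ : ℝ => if k = 0 then ∫ s in (0 : ℝ)..1, (↑(a 0) : ℝ → ℂ) s else 0) atTop) ∧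
    (∀ I : Submodule ℂ NCTorus,
      (∀ x ∈ I, ∀ y : NCTorus, mul x y ∈ I ∧ mul y x ∈ I) →
      MackeyClosedNCT I → I ≠ ⊥ →
      (∃ c ∈ I, ∃ c' : NCTorus,
        mul c c' = Finsupp.single 0 onePer ∧ mul c' c = Finsupp.single 0 onePer) ∧
      I = ⊤) := by
  refine ⟨fun a k => NCT.conj1 hmul hθ a k, fun a k => NCT.conj2 hmul hθ a k,
    fun a k => NCT.conj3 hmul hθ a k, fun I hI hM hne => NCT.simple hmul hθ I hI hM hne⟩
end
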